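/- arXiv:1306.5460 — 7 statements merged into one kernel-verified Lean document; each statement's English description precedes it below -/
import Mathlib

section
/- Let p₁, p₂, …, pₙ be points in ℝ² with pᵢ ≠ pᵢ₊₁ for every i. The polygonal path on p₁, …, pₙ is self-approaching if and only if for all indices i, j with 2 ≤ i < j ≤ n, the inner product ⟪p_j − p_i, p_i − p_{i−1}⟫ is nonnegative (equivalently, p_j lies in the closed half-plane l⁺(p_{i−1}, p_i)). -/
/-- The point of the polygonal path `p 0, p 1, …` lying on segment `i`
(from `p i` to `p (i+1)`) at fraction `s ∈ [0,1]`. -/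
noncomputable def polyPt (p : ℕ → EuclideanSpace ℝ (Fin 2)) (i : ℕ) (s : ℝ) :
    EuclideanSpace ℝ (Fin 2) :=
  (1 - s) • p i + s • p (i + 1)

/-- `(i, s)` comes no later than `(j, t)` in the lexicographic order on parameters
of points of a polygonal path. -/
def ParamLE (i : ℕ) (s : ℝ) (j : ℕ) (t : ℝ) : Prop :=
  i < j ∨ (i = j ∧ s ≤ t)

/-- The polygonal path on the points `p 0, …, p m` (with `m` segments, indexed
`0, …, m-1`) is self-approaching: for any three of its points `a, b, c` in order
along the path, `dist a c ≥ dist b c`. -/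
def IsSelfApproachingPoly (m : ℕ) (p : ℕ → EuclideanSpace ℝ (Fin 2)) : Prop :=
  ∀ (i j k : ℕ) (s t u : ℝ), i < m → j < m → k < m →
    s ∈ Set.Icc (0 : ℝ) 1 → t ∈ Set.Icc (0 : ℝ) 1 → u ∈ Set.Icc (0 : ℝ) 1 →
    ParamLE i s j t → ParamLE j t k u →
    dist (polyPt p j t) (polyPt p k u) ≤ dist (polyPt p i s) (polyPt p k u)

/-- The polygonal path on the points `p 0, …, p m` has increasing chords: for any
four of its points `a, b, c, d` in order along the path, `dist a d ≥ dist b c`. -/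
def IsIncreasingChordsPoly (m : ℕ) (p : ℕ → EuclideanSpace ℝ (Fin 2)) : Prop :=
  ∀ (i j k l : ℕ) (s t u v : ℝ), i < m → j < m → k < m → l < m →
    s ∈ Set.Icc (0 : ℝ) 1 → t ∈ Set.Icc (0 : ℝ) 1 → u ∈ Set.Icc (0 : ℝ) 1 →
    v ∈ Set.Icc (0 : ℝ) 1 →
    ParamLE i s j t → ParamLE j t k u → ParamLE k u l v →
    dist (polyPt p j t) (polyPt p k u) ≤ dist (polyPt p i s) (polyPt p l v)

open scoped RealInnerProductSpace

/-! A point of a segment at remaining fraction `ε` before the endpoint `q`, with direction `d`,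
sees a fixed point `c` at distance `‖(c - q) + ε • d‖`, whose square is a quadratic in `ε` with
slope `2 ⟪c - q, d⟫` at `ε = 0`. So if the path is self-approaching, taking `c = p j` and points
just before the vertex `p i` forces `⟪p j - p i, p i - p (i - 1)⟫ ≥ 0`. Conversely, the half-plane
condition at the vertex `p (i + 1)` for all later vertices extends by convexity to every later
point `c` of the path; hence the distance to `c` decreases along every earlier segment, and so
along the whole path up to `c`. -/

section Segment

variable {E : Type*} [NormedAddCommGroup E] [InnerProductSpace ℝ E]

lemma norm_add_smul_sq (b d : E) (ε : ℝ) :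
    ‖b + ε • d‖ ^ 2 = ‖b‖ ^ 2 + 2 * ε * ⟪b, d⟫ + ε ^ 2 * ‖d‖ ^ 2 := by
  rw [norm_add_sq_real, real_inner_smul_right, norm_smul, mul_pow, Real.norm_eq_abs, sq_abs]
  ring

lemma norm_add_smul_le_norm_add_smul {b d : E} (h : 0 ≤ ⟪b, d⟫) {ε δ : ℝ} (hε : 0 ≤ ε)
    (hεδ : ε ≤ δ) : ‖b + ε • d‖ ≤ ‖b + δ • d‖ := by
  refine (pow_le_pow_iff_left₀ (norm_nonneg _) (norm_nonneg _) two_ne_zero).1 ?_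
  rw [norm_add_smul_sq, norm_add_smul_sq]
  have hsq : ε ^ 2 ≤ δ ^ 2 := pow_le_pow_left₀ hε hεδ 2
  nlinarith [mul_le_mul_of_nonneg_right hsq (sq_nonneg ‖d‖)]

lemma inner_nonneg_of_forall_norm_le_norm_add_smul {b d : E}
    (h : ∀ ε ∈ Set.Ioc (0 : ℝ) 1, ‖b‖ ≤ ‖b + ε • d‖) : 0 ≤ ⟪b, d⟫ := by
  have hpos : ∀ ε ∈ Set.Ioc (0 : ℝ) 1, 0 ≤ 2 * ⟪b, d⟫ + ε * ‖d‖ ^ 2 := by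
    intro ε hε
    have hsq := pow_le_pow_left₀ (norm_nonneg b) (h ε hε) 2
    rw [norm_add_smul_sq] at hsq
    have : 0 ≤ ε * (2 * ⟪b, d⟫ + ε * ‖d‖ ^ 2) := by linarith
    exact nonneg_of_mul_nonneg_right this hε.1
  have hlim : Filter.Tendsto (fun ε : ℝ ↦ 2 * ⟪b, d⟫ + ε * ‖d‖ ^ 2) (nhdsWithin 0 (Set.Ioi 0))
      (nhds (2 * ⟪b, d⟫ + 0 * ‖d‖ ^ 2)) :=
    ((continuous_const.add (continuous_id.mul continuous_const)).tendsto 0).mono_left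
      nhdsWithin_le_nhds
  have := ge_of_tendsto hlim <| Filter.mem_of_superset (Ioc_mem_nhdsGT zero_lt_one) hpos
  linarith

end Segment

section PolygonalPath

variable {m : ℕ} {p : ℕ → EuclideanSpace ℝ (Fin 2)}

lemma polyPt_eq_lineMap (p : ℕ → EuclideanSpace ℝ (Fin 2)) (i : ℕ) (s : ℝ) :
    polyPt p i s = AffineMap.lineMap (p i) (p (i + 1)) s :=
  (AffineMap.lineMap_apply_module _ _ _).symm

@[simp]
lemma polyPt_zero (p : ℕ → EuclideanSpace ℝ (Fin 2)) (i : ℕ) : polyPt p i 0 = p i := by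
  simp [polyPt_eq_lineMap]

@[simp]
lemma polyPt_one (p : ℕ → EuclideanSpace ℝ (Fin 2)) (i : ℕ) : polyPt p i 1 = p (i + 1) := by
  simp [polyPt_eq_lineMap]

lemma ParamLE.fst_le {i j : ℕ} {s t : ℝ} (h : ParamLE i s j t) : i ≤ j := by
  rcases h with h | ⟨rfl, -⟩ <;> omega

lemma dist_polyPt_eq (p : ℕ → EuclideanSpace ℝ (Fin 2)) (i : ℕ) (t : ℝ)
    (c : EuclideanSpace ℝ (Fin 2)) :
    dist (polyPt p i t) c = ‖(c - p (i + 1)) + (1 - t) • (p (i + 1) - p i)‖ := by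
  rw [dist_comm, dist_eq_norm]
  congr 1
  unfold polyPt
  module

lemma dist_polyPt_le_of_inner_nonneg {i : ℕ} {c : EuclideanSpace ℝ (Fin 2)}
    (h : 0 ≤ ⟪c - p (i + 1), p (i + 1) - p i⟫) {s t : ℝ} (hst : s ≤ t) (ht : t ≤ 1) :
    dist (polyPt p i t) c ≤ dist (polyPt p i s) c := by
  rw [dist_polyPt_eq, dist_polyPt_eq]
  exact norm_add_smul_le_norm_add_smul h (by linarith) (by linarith)

lemma dist_polyPt_polyPt_le {k : ℕ} {s t u : ℝ} (hst : s ≤ t) (htu : t ≤ u) :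
    dist (polyPt p k t) (polyPt p k u) ≤ dist (polyPt p k s) (polyPt p k u) := by
  simp only [polyPt_eq_lineMap, dist_lineMap_lineMap, Real.dist_eq]
  refine mul_le_mul_of_nonneg_right ?_ dist_nonneg
  rw [abs_of_nonpos (by linarith), abs_of_nonpos (by linarith)]
  linarith

lemma inner_polyPt_sub (p : ℕ → EuclideanSpace ℝ (Fin 2)) (k : ℕ) (u : ℝ)
    (x v : EuclideanSpace ℝ (Fin 2)) :
    ⟪polyPt p k u - x, v⟫ = (1 - u) * ⟪p k - x, v⟫ + u * ⟪p (k + 1) - x, v⟫ := by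
  have : polyPt p k u - x = (1 - u) • (p k - x) + u • (p (k + 1) - x) := by
    unfold polyPt; module
  rw [this, inner_add_left, real_inner_smul_left, real_inner_smul_left]

variable (H : ∀ i j : ℕ, 1 ≤ i → i < j → j ≤ m → 0 ≤ ⟪p j - p i, p i - p (i - 1)⟫)
include H

lemma inner_polyPt_sub_nonneg {i k : ℕ} {u : ℝ} (hik : i < k) (hk : k < m)
    (hu : u ∈ Set.Icc (0 : ℝ) 1) : 0 ≤ ⟪polyPt p k u - p (i + 1), p (i + 1) - p i⟫ := by
  have hvertex : ∀ j, i < j → j ≤ m → 0 ≤ ⟪p j - p (i + 1), p (i + 1) - p i⟫ := by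
    intro j hij hjm
    rcases (Nat.succ_le_of_lt hij).eq_or_lt with rfl | hlt
    · simp
    · simpa using H (i + 1) j (by omega) hlt hjm
  rw [inner_polyPt_sub]
  exact add_nonneg (mul_nonneg (by linarith [hu.2]) (hvertex k hik hk.le))
    (mul_nonneg hu.1 (hvertex (k + 1) (by omega) hk))

lemma dist_polyPt_le_of_paramLE {j k : ℕ} {s t u : ℝ} (hk : k < m)
    (hu : u ∈ Set.Icc (0 : ℝ) 1) (hst : s ≤ t) (ht : t ≤ 1) (htu : ParamLE j t k u) :
    dist (polyPt p j t) (polyPt p k u) ≤ dist (polyPt p j s) (polyPt p k u) := by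
  rcases htu with hjk | ⟨rfl, htu⟩
  · exact dist_polyPt_le_of_inner_nonneg (inner_polyPt_sub_nonneg H hjk hk hu) hst ht
  · exact dist_polyPt_polyPt_le hst htu

lemma dist_vertex_polyPt_le_of_le {i j k : ℕ} {u : ℝ} (hk : k < m)
    (hu : u ∈ Set.Icc (0 : ℝ) 1) (hij : i ≤ j) (hjk : j ≤ k) :
    dist (p j) (polyPt p k u) ≤ dist (p i) (polyPt p k u) := by
  induction j, hij using Nat.le_induction with
  | base => exact le_rfl
  | succ j _ ih =>
    have step := dist_polyPt_le_of_paramLE H hk hu zero_le_one le_rfl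
      (Or.inl (show j < k by omega))
    simp only [polyPt_zero, polyPt_one] at step
    exact step.trans (ih (by omega))

theorem isSelfApproachingPoly_of_inner_nonneg : IsSelfApproachingPoly m p := by
  intro i j k s t u _ _ hk hs ht hu hij hjk
  rcases hij with hij | ⟨rfl, hst⟩
  · calc dist (polyPt p j t) (polyPt p k u)
        ≤ dist (polyPt p j 0) (polyPt p k u) :=
          dist_polyPt_le_of_paramLE H hk hu ht.1 ht.2 hjk
      _ ≤ dist (polyPt p i 1) (polyPt p k u) := by
          simpa using dist_vertex_polyPt_le_of_le H hk hu hij hjk.fst_le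
      _ ≤ dist (polyPt p i s) (polyPt p k u) :=
          dist_polyPt_le_of_paramLE H hk hu hs.2 le_rfl (Or.inl (by have := hjk.fst_le; omega))
  · exact dist_polyPt_le_of_paramLE H hk hu hst ht.2 hjk

end PolygonalPath

theorem inner_nonneg_of_isSelfApproachingPoly {m : ℕ} {p : ℕ → EuclideanSpace ℝ (Fin 2)}
    (h : IsSelfApproachingPoly m p) {i j : ℕ} (hi : 1 ≤ i) (hij : i < j) (hj : j ≤ m) :
    0 ≤ ⟪p j - p i, p i - p (i - 1)⟫ := by
  obtain ⟨i, rfl⟩ : ∃ i', i = i' + 1 := ⟨i - 1, by omega⟩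
  obtain ⟨j, rfl⟩ : ∃ j', j = j' + 1 := ⟨j - 1, by omega⟩
  refine inner_nonneg_of_forall_norm_le_norm_add_smul fun ε hε ↦ ?_
  have := h i i j (1 - ε) 1 1 (by omega) (by omega) (by omega)
    ⟨by linarith [hε.2], by linarith [hε.1]⟩ ⟨zero_le_one, le_rfl⟩ ⟨zero_le_one, le_rfl⟩
    (Or.inr ⟨rfl, by linarith [hε.1]⟩) (Or.inl (by omega))
  rw [dist_polyPt_eq, dist_polyPt_eq, sub_self, zero_smul, add_zero, sub_sub_cancel] at this
  simpa using this

theorem isSelfApproachingPoly_iff_inner_nonneg_general (m : ℕ)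
    (p : ℕ → EuclideanSpace ℝ (Fin 2)) :
    IsSelfApproachingPoly m p ↔
      ∀ i j : ℕ, 1 ≤ i → i < j → j ≤ m →
        0 ≤ (inner ℝ (p j - p i) (p i - p (i - 1)) : ℝ) :=
  ⟨fun h _ _ ↦ inner_nonneg_of_isSelfApproachingPoly h,
    isSelfApproachingPoly_of_inner_nonneg⟩

/-- Corollary: a polygonal path `p 0, …, p m` (1-indexed `p₁, …, pₙ` with `n = m+1`)
is self-approaching iff for all `1 ≤ i < j ≤ m`, the point `p j` lies in the closed
half-plane `l⁺(p (i-1), p i)`, i.e. `⟪p j - p i, p i - p (i-1)⟫ ≥ 0`. -/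
theorem isSelfApproachingPoly_iff_inner_nonneg (m : ℕ)
    (p : ℕ → EuclideanSpace ℝ (Fin 2)) (hne : ∀ i < m, p i ≠ p (i + 1)) :
    IsSelfApproachingPoly m p ↔
      ∀ i j : ℕ, 1 ≤ i → i < j → j ≤ m →
        0 ≤ (inner ℝ (p j - p i) (p i - p (i - 1)) : ℝ) :=
  isSelfApproachingPoly_iff_inner_nonneg_general m p
end

section
/- Let p₀, p₁, …, p_m be points in ℝ² with pᵢ ≠ pᵢ₊₁ for every i, and suppose the polygonal path on p₀, …, p_m has increasing chords. Then for every interior index i with 1 ≤ i ≤ m−1, the angle ∠(p_{i−1}, p_i, p_{i+1}) is at least π/2. -/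
open scoped RealInnerProductSpace EuclideanGeometry

theorem InnerProductGeometry.pi_div_two_le_angle_of_inner_nonpos {V : Type*}
    [NormedAddCommGroup V] [InnerProductSpace ℝ V] {x y : V} (h : ⟪x, y⟫ ≤ 0) :
    Real.pi / 2 ≤ InnerProductGeometry.angle x y := by
  rw [InnerProductGeometry.angle, ← not_lt, Real.arccos_lt_pi_div_two, not_lt]
  exact div_nonpos_of_nonpos_of_nonneg h (by positivity)

theorem IsMinOn.real_inner_sub_sub_nonpos {F : Type*} [NormedAddCommGroup F]
    [InnerProductSpace ℝ F] {K : Set F} (hK : Convex ℝ K) {u v : F} (hv : v ∈ K)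
    (hmin : IsMinOn (fun w => dist w u) K v) : ∀ w ∈ K, ⟪u - v, w - v⟫ ≤ 0 := by
  have : Nonempty K := ⟨⟨v, hv⟩⟩
  refine (norm_eq_iInf_iff_real_inner_le_zero hK hv).1 (le_antisymm ?_ ?_)
  · exact le_ciInf fun w => by simpa [dist_eq_norm, norm_sub_rev] using hmin w.2
  · exact ciInf_le ⟨0, by rintro _ ⟨w, rfl⟩; positivity⟩ (⟨v, hv⟩ : K)

theorem EuclideanGeometry.pi_div_two_le_angle_of_isMinOn_segment {V : Type*}
    [NormedAddCommGroup V] [InnerProductSpace ℝ V] {a b c : V}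
    (h : IsMinOn (fun x => dist x c) (segment ℝ a b) b) : Real.pi / 2 ≤ ∠ a b c := by
  have := h.real_inner_sub_sub_nonpos (convex_segment a b) (right_mem_segment ℝ a b) a
    (left_mem_segment ℝ a b)
  exact InnerProductGeometry.pi_div_two_le_angle_of_inner_nonpos (by rwa [real_inner_comm])

theorem IsIncreasingChordsPoly.isMinOn_dist_segment {m : ℕ} {p : ℕ → EuclideanSpace ℝ (Fin 2)}
    (hic : IsIncreasingChordsPoly m p) {i : ℕ} (hi : i + 2 ≤ m) :
    IsMinOn (fun x => dist x (p (i + 2))) (segment ℝ (p i) (p (i + 1))) (p (i + 1)) := by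
  rw [segment_eq_image]
  rintro _ ⟨s, hs, rfl⟩
  have := hic i i (i + 1) (i + 1) s 1 1 1 (by omega) (by omega) (by omega) (by omega) hs
    (by simp) (by simp) (by simp) (.inr ⟨rfl, hs.2⟩) (.inl (by omega)) (.inr ⟨rfl, le_rfl⟩)
  simpa [polyPt] using this

theorem increasingChords_angle_ge_pi_div_two_general (m : ℕ)
    (p : ℕ → EuclideanSpace ℝ (Fin 2))
    (hic : IsIncreasingChordsPoly m p) :
    ∀ i : ℕ, 1 ≤ i → i + 1 ≤ m →
      Real.pi / 2 ≤ EuclideanGeometry.angle (p (i - 1)) (p i) (p (i + 1)) := by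
  rintro _ hi him
  obtain ⟨j, rfl⟩ : ∃ j, _ = j + 1 := Nat.exists_eq_add_of_le' hi
  simpa using EuclideanGeometry.pi_div_two_le_angle_of_isMinOn_segment
    (hic.isMinOn_dist_segment (i := j) (by omega))

/-- In an increasing-chord polygonal path `p 0, …, p m`, the angle at each interior
vertex `p i` (for `1 ≤ i ≤ m - 1`) is at least `π / 2`. -/
theorem increasingChords_angle_ge_pi_div_two (m : ℕ)
    (p : ℕ → EuclideanSpace ℝ (Fin 2)) (hne : ∀ i < m, p i ≠ p (i + 1))
    (hic : IsIncreasingChordsPoly m p) :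
    ∀ i : ℕ, 1 ≤ i → i + 1 ≤ m →
      Real.pi / 2 ≤ EuclideanGeometry.angle (p (i - 1)) (p i) (p (i + 1)) :=
  increasingChords_angle_ge_pi_div_two_general m p hic
end

section
/- Let p₀, p₁, …, p_m be points in ℝ² with pᵢ ≠ pᵢ₊₁ for every i, and suppose the polygonal path on p₀, …, p_m has increasing chords. Let k ≥ 2 and let i be an index with 1 ≤ i and i + k − 1 ≤ m − 1, and suppose the path makes a left turn at each of the consecutive vertices p_i, p_{i+1}, …, p_{i+k−1}. Then the sum ∑_{j=i}^{i+k−1} ∠(p_{j−1}, p_j, p_{j+1}) is at least π·(k−1). -/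
open Finset Real Filter Topology
open scoped RealInnerProductSpace

theorem inner_nonneg_of_forall_norm_le_norm_add_smul_s5 {E : Type*} [NormedAddCommGroup E]
    [InnerProductSpace ℝ E] {v d : E} (h : ∀ t ∈ Set.Ioc (0 : ℝ) 1, ‖v‖ ≤ ‖v + t • d‖) :
    0 ≤ ⟪v, d⟫ := by
  have hquad : ∀ t ∈ Set.Ioc (0 : ℝ) 1, 0 ≤ 2 * ⟪v, d⟫ + t * ‖d‖ ^ 2 := by
    intro t ht
    have hsq := pow_le_pow_left₀ (norm_nonneg v) (h t ht) 2
    rw [norm_add_sq_real, inner_smul_right, norm_smul, mul_pow, Real.norm_eq_abs, sq_abs] at hsq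
    exact (mul_nonneg_iff_of_pos_left ht.1).1 (by nlinarith)
  have hlim : Tendsto (fun t : ℝ ↦ 2 * ⟪v, d⟫ + t * ‖d‖ ^ 2) (𝓝[>] 0) (𝓝 (2 * ⟪v, d⟫)) :=
    (Continuous.tendsto' (by fun_prop) _ _ (by simp)).mono_left nhdsWithin_le_nhds
  linarith [ge_of_tendsto hlim (eventually_of_mem (Ioc_mem_nhdsGT one_pos) hquad)]

theorem polyPt_eq_add_smul (p : ℕ → EuclideanSpace ℝ (Fin 2)) (j : ℕ) (t : ℝ) :
    polyPt p j t = p j + t • (p (j + 1) - p j) := by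
  unfold polyPt; module

theorem IsIncreasingChordsPoly.inner_later_segment_nonneg {m : ℕ}
    {p : ℕ → EuclideanSpace ℝ (Fin 2)}
    (hic : IsIncreasingChordsPoly m p) {j l : ℕ} (hjl : j < l) (hlm : l < m) :
    0 ≤ ⟪p l - p j, p (l + 1) - p l⟫ := by
  refine inner_nonneg_of_forall_norm_le_norm_add_smul_s5 fun t ht ↦ ?_
  have h := hic j j l l 0 0 0 t (hjl.trans hlm) (hjl.trans hlm) hlm hlm (by simp) (by simp)
    (by simp) (Set.Ioc_subset_Icc_self ht) (Or.inr ⟨rfl, le_rfl⟩) (Or.inl hjl)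
    (Or.inr ⟨rfl, ht.1.le⟩)
  simp only [polyPt_eq_add_smul, dist_eq_norm] at h
  convert h using 1 <;> rw [← norm_neg] <;> congr 1 <;> module

theorem IsIncreasingChordsPoly.inner_earlier_segment_nonneg {m : ℕ}
    {p : ℕ → EuclideanSpace ℝ (Fin 2)}
    (hic : IsIncreasingChordsPoly m p) {j l : ℕ} (hjl : j < l) (hlm : l < m) :
    0 ≤ ⟪p (l + 1) - p (j + 1), p (j + 1) - p j⟫ := by
  refine inner_nonneg_of_forall_norm_le_norm_add_smul_s5 fun t ht ↦ ?_
  have h := hic j j l l (1 - t) 1 1 1 (hjl.trans hlm) (hjl.trans hlm) hlm hlm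
    ⟨by linarith [ht.2], by linarith [ht.1]⟩ (by simp) (by simp) (by simp)
    (Or.inr ⟨rfl, by linarith [ht.1]⟩) (Or.inl hjl) (Or.inr ⟨rfl, le_rfl⟩)
  simp only [polyPt_eq_add_smul, dist_eq_norm] at h
  convert h using 1 <;> rw [← norm_neg] <;> congr 1 <;> module

theorem Complex.inner_ofReal_mul_exp (a b θ ψ : ℝ) :
    ⟪(a : ℂ) * Complex.exp (θ * Complex.I), (b : ℂ) * Complex.exp (ψ * Complex.I)⟫ =
      a * b * Real.cos (ψ - θ) := by
  have hexp : Complex.exp (ψ * Complex.I) * Complex.exp (θ * -Complex.I) =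
      Complex.exp ((ψ - θ : ℝ) * Complex.I) := by
    rw [← Complex.exp_add]; push_cast; ring_nf
  rw [Complex.inner]
  simp only [map_mul, Complex.conj_ofReal, ← Complex.exp_conj, Complex.conj_I]
  rw [mul_mul_mul_comm, hexp, mul_comm (b : ℂ), ← Complex.ofReal_mul, Complex.re_ofReal_mul,
    Complex.exp_ofReal_mul_I_re]

theorem Complex.arg_pos_of_im_pos {z : ℂ} (h : 0 < z.im) : 0 < z.arg :=
  lt_of_le_of_ne (Complex.arg_nonneg_iff.2 h.le) fun h0 ↦
    h.ne' (Complex.arg_eq_zero_iff.1 h0.symm).2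

theorem Complex.im_div_pos_of_cross_pos {u w : ℂ} (h : 0 < u.re * w.im - u.im * w.re) :
    0 < (w / u).im := by
  have hu : u ≠ 0 := by rintro rfl; simp at h
  rw [Complex.div_im, ← sub_div]
  exact div_pos (by linarith) (Complex.normSq_pos.2 hu)

theorem Complex.re_div_nonneg_of_inner_nonneg {u w : ℂ} (h : 0 ≤ ⟪u, w⟫) : 0 ≤ (w / u).re := by
  rw [Complex.div_re, ← add_div]
  refine div_nonneg ?_ (Complex.normSq_nonneg u)
  simpa [Complex.inner, mul_comm] using h

theorem Complex.angle_eq_pi_sub_abs_arg_div {a b c : ℂ} (hab : a ≠ b) (hcb : c ≠ b) :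
    EuclideanGeometry.angle a b c = π - |((c - b) / (b - a)).arg| := by
  rw [EuclideanGeometry.angle, vsub_eq_sub, vsub_eq_sub, ← neg_sub,
    InnerProductGeometry.angle_neg_left, InnerProductGeometry.angle_comm,
    Complex.angle_eq_abs_arg (sub_ne_zero.2 hcb) (sub_ne_zero.2 hab.symm)]

theorem succ_le_add_pi_of_chord_cos_sums {x φ : ℕ → ℝ} {N n : ℕ} (hx : ∀ r ≤ N, 0 < x r)
    (hstep : ∀ r < N, φ r < φ (r + 1) ∧ φ (r + 1) ≤ φ r + π / 2)
    (hfwd : ∀ j l, j < l → l ≤ N → 0 ≤ ∑ r ∈ Ico j l, x r * cos (φ l - φ r))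
    (hbwd : ∀ j l, j < l → l ≤ N → 0 ≤ ∑ r ∈ Ico (j + 1) (l + 1), x r * cos (φ r - φ j))
    (hn : n < N) (hφn : φ n ≤ φ 0 + π) :
    φ (n + 1) ≤ φ 0 + π := by
  have hmono : MonotoneOn φ (Set.Iic N) :=
    monotoneOn_of_le_add_one Set.ordConnected_Iic fun r _ _ hr ↦ (hstep r hr).1.le
  by_contra! hgt
  obtain ⟨δ, hδ⟩ : ∃ δ, φ (n + 1) = δ + π := ⟨φ (n + 1) - π, by ring⟩
  have hcos : ∀ a, cos (φ (n + 1) - a) = -cos (a - δ) := fun a ↦ by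
    rw [hδ, show δ + π - a = π - (a - δ) by ring, cos_pi_sub]
  obtain ⟨j, hjn, hjδ, hmid⟩ : ∃ j ≤ n, φ j < δ ∧ ∀ r, j < r → r ≤ n → δ ≤ φ r :=
    ⟨Nat.findGreatest (φ · < δ) n, Nat.findGreatest_le n,
      Nat.findGreatest_spec (P := (φ · < δ)) (Nat.zero_le n) (by linarith),
      fun r hjr hrn ↦ not_lt.1 (Nat.findGreatest_is_greatest hjr hrn)⟩
  have hjn' : j < n := lt_of_le_of_ne hjn (by rintro rfl; linarith [hstep j hn])
  have hφj : φ 0 ≤ φ j := hmono (by simp) (by simp; omega) (Nat.zero_le j)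
  have hc : 0 ≤ cos (φ j - δ) :=
    cos_nonneg_of_mem_Icc ⟨by linarith [hstep n hn], by linarith [pi_pos]⟩
  have hA : ∑ r ∈ Ico (j + 1) (n + 1), x r * cos (φ r - δ) ≤ -(x j * cos (φ j - δ)) := by
    have h := hfwd j (n + 1) (by omega) hn
    rw [sum_eq_sum_Ico_succ_bot (by omega)] at h
    simp only [hcos, mul_neg, sum_neg_distrib] at h
    linarith
  have hB : x (n + 1) * cos (φ j - δ) ≤ ∑ r ∈ Ico (j + 1) (n + 1), x r * cos (φ r - φ j) := by
    have h := hbwd j (n + 1) (by omega) hn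
    rw [sum_Ico_succ_top (by omega), hcos] at h
    linarith
  have hlt : ∑ r ∈ Ico (j + 1) (n + 1), x r * cos (φ r - φ j) <
      ∑ r ∈ Ico (j + 1) (n + 1), x r * cos (φ r - δ) := by
    refine sum_lt_sum_of_nonempty ⟨j + 1, by simp; omega⟩ fun r hr ↦ ?_
    rw [mem_Ico] at hr
    have hφr : φ r ≤ φ n := hmono (by simp; omega) (by simp; omega) (by omega)
    exact mul_lt_mul_of_pos_left (cos_lt_cos_of_nonneg_of_le_pi
      (by linarith [hmid r (by omega) (by omega)]) (by linarith) (by linarith)) (hx r (by omega))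
  linarith [mul_nonneg (hx j (by omega)).le hc, mul_nonneg (hx (n + 1) hn).le hc]

theorem le_add_pi_of_chord_cos_sums {x φ : ℕ → ℝ} {N : ℕ} (hx : ∀ r ≤ N, 0 < x r)
    (hstep : ∀ r < N, φ r < φ (r + 1) ∧ φ (r + 1) ≤ φ r + π / 2)
    (hfwd : ∀ j l, j < l → l ≤ N → 0 ≤ ∑ r ∈ Ico j l, x r * cos (φ l - φ r))
    (hbwd : ∀ j l, j < l → l ≤ N → 0 ≤ ∑ r ∈ Ico (j + 1) (l + 1), x r * cos (φ r - φ j)) :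
    φ N ≤ φ 0 + π := by
  suffices ∀ n ≤ N, φ n ≤ φ 0 + π from this N le_rfl
  intro n
  induction n with
  | zero => intro; linarith [pi_pos]
  | succ n ih =>
    exact fun hn ↦ succ_le_add_pi_of_chord_cos_sums hx hstep hfwd hbwd hn (ih (by omega))

noncomputable def liftArg (z : ℕ → ℂ) (r : ℕ) : ℝ :=
  (z 0).arg + ∑ v ∈ range r, (z (v + 1) / z v).arg

theorem liftArg_succ (z : ℕ → ℂ) (r : ℕ) :
    liftArg z (r + 1) = liftArg z r + (z (r + 1) / z r).arg := by
  rw [liftArg, liftArg, sum_range_succ, add_assoc]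

theorem eq_norm_mul_exp_liftArg {z : ℕ → ℂ} {r : ℕ} (hz : ∀ v ≤ r, z v ≠ 0) :
    z r = ‖z r‖ * Complex.exp (liftArg z r * Complex.I) := by
  induction r with
  | zero => simp [liftArg, Complex.norm_mul_exp_arg_mul_I]
  | succ r ih =>
    have hzr : z r ≠ 0 := hz r (by omega)
    calc z (r + 1) = z r * (z (r + 1) / z r) := (mul_div_cancel₀ _ hzr).symm
      _ = ‖z r‖ * Complex.exp (liftArg z r * Complex.I) *
            (‖z (r + 1) / z r‖ * Complex.exp ((z (r + 1) / z r).arg * Complex.I)) := by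
          rw [Complex.norm_mul_exp_arg_mul_I, ← ih fun v hv ↦ hz v (by omega)]
      _ = ‖z (r + 1)‖ * Complex.exp (liftArg z (r + 1) * Complex.I) := by
          rw [liftArg_succ, norm_div, Complex.ofReal_add, add_mul, Complex.exp_add]
          push_cast
          field_simp [norm_ne_zero_iff.2 hzr]

theorem inner_eq_mul_cos_liftArg {z : ℕ → ℂ} {N j r : ℕ} (hz : ∀ v ≤ N, z v ≠ 0)
    (hj : j ≤ N) (hr : r ≤ N) :
    ⟪z j, z r⟫ = ‖z j‖ * ‖z r‖ * cos (liftArg z r - liftArg z j) := by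
  have h := Complex.inner_ofReal_mul_exp ‖z j‖ ‖z r‖ (liftArg z j) (liftArg z r)
  rwa [← eq_norm_mul_exp_liftArg fun v hv ↦ hz v (by omega),
    ← eq_norm_mul_exp_liftArg fun v hv ↦ hz v (by omega)] at h

theorem inner_sum_eq_mul_sum_cos_liftArg {z : ℕ → ℂ} {N l : ℕ} {s : Finset ℕ}
    (hz : ∀ v ≤ N, z v ≠ 0) (hs : ∀ r ∈ s, r ≤ N) (hl : l ≤ N) :
    ⟪∑ r ∈ s, z r, z l⟫ = ‖z l‖ * ∑ r ∈ s, ‖z r‖ * cos (liftArg z l - liftArg z r) := by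
  rw [sum_inner, mul_sum]
  refine sum_congr rfl fun r hr ↦ ?_
  rw [inner_eq_mul_cos_liftArg hz (hs r hr) hl]
  ring

theorem sum_arg_div_le_pi {q : ℕ → ℂ} {N : ℕ} (hne : ∀ r ≤ N, q r ≠ q (r + 1))
    (hleft : ∀ r < N, 0 < ((q (r + 2) - q (r + 1)) / (q (r + 1) - q r)).im)
    (hfwd : ∀ j l, j < l → l ≤ N → 0 ≤ ⟪q l - q j, q (l + 1) - q l⟫)
    (hbwd : ∀ j l, j < l → l ≤ N → 0 ≤ ⟪q (l + 1) - q (j + 1), q (j + 1) - q j⟫) :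
    ∑ r ∈ range N, ((q (r + 2) - q (r + 1)) / (q (r + 1) - q r)).arg ≤ π := by
  set z : ℕ → ℂ := fun r ↦ q (r + 1) - q r
  have hz : ∀ r ≤ N, z r ≠ 0 := fun r hr ↦ sub_ne_zero.2 (hne r hr).symm
  have hnorm : ∀ r ≤ N, 0 < ‖z r‖ := fun r hr ↦ norm_pos_iff.2 (hz r hr)
  have htelescope : ∀ j l, j ≤ l → q l - q j = ∑ r ∈ Ico j l, z r :=
    fun j l h ↦ (sum_Ico_sub q h).symm
  have hstep : ∀ r < N, liftArg z r < liftArg z (r + 1) ∧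
      liftArg z (r + 1) ≤ liftArg z r + π / 2 := by
    intro r hr
    have hpos := Complex.arg_pos_of_im_pos (hleft r hr)
    have hre : 0 ≤ (z (r + 1) / z r).re := Complex.re_div_nonneg_of_inner_nonneg <| by
      rw [real_inner_comm]; exact hbwd r (r + 1) (by omega) (by omega)
    have hle := (abs_le.1 (Complex.abs_arg_le_pi_div_two_iff.2 hre)).2
    rw [liftArg_succ]
    constructor <;> linarith
  have hturn := le_add_pi_of_chord_cos_sums (x := fun r ↦ ‖z r‖) hnorm hstep ?_ ?_
  · simpa [liftArg] using hturn
  · intro j l hjl hl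
    have h := hfwd j l hjl hl
    rw [htelescope j l hjl.le, inner_sum_eq_mul_sum_cos_liftArg (l := l) hz
      (fun r hr ↦ by rw [mem_Ico] at hr; omega) hl] at h
    exact nonneg_of_mul_nonneg_right h (hnorm l hl)
  · intro j l hjl hl
    have h := hbwd j l hjl hl
    rw [htelescope (j + 1) (l + 1) (by omega), inner_sum_eq_mul_sum_cos_liftArg (l := j) hz
      (fun r hr ↦ by rw [mem_Ico] at hr; omega) (by omega)] at h
    simp_rw [← cos_neg (liftArg z j - _), neg_sub] at h
    exact nonneg_of_mul_nonneg_right h (hnorm j (by omega))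

theorem pi_mul_sub_one_le_sum_angle {q : ℕ → ℂ} {N : ℕ} (hne : ∀ r ≤ N, q r ≠ q (r + 1))
    (hleft : ∀ r < N, 0 < ((q (r + 2) - q (r + 1)) / (q (r + 1) - q r)).im)
    (hfwd : ∀ j l, j < l → l ≤ N → 0 ≤ ⟪q l - q j, q (l + 1) - q l⟫)
    (hbwd : ∀ j l, j < l → l ≤ N → 0 ≤ ⟪q (l + 1) - q (j + 1), q (j + 1) - q j⟫) :
    π * (N - 1) ≤ ∑ r ∈ range N, EuclideanGeometry.angle (q r) (q (r + 1)) (q (r + 2)) := by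
  have hangle : ∀ r ∈ range N, EuclideanGeometry.angle (q r) (q (r + 1)) (q (r + 2)) =
      π - ((q (r + 2) - q (r + 1)) / (q (r + 1) - q r)).arg := by
    intro r hr
    rw [mem_range] at hr
    rw [Complex.angle_eq_pi_sub_abs_arg_div (hne r (by omega)) (hne (r + 1) (by omega)).symm,
      abs_of_pos (Complex.arg_pos_of_im_pos (hleft r hr))]
  rw [sum_congr rfl hangle, sum_sub_distrib, sum_const, card_range, nsmul_eq_mul]
  linarith [sum_arg_div_le_pi hne hleft hfwd hbwd]

theorem increasingChords_left_turn_angle_sum_general (m : ℕ)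
    (p : ℕ → EuclideanSpace ℝ (Fin 2)) (hne : ∀ i < m, p i ≠ p (i + 1))
    (hic : IsIncreasingChordsPoly m p)
    (k i : ℕ) (hi : 1 ≤ i) (hik : i + k ≤ m)
    (hleft : ∀ j : ℕ, i ≤ j → j < i + k →
      0 < (p j - p (j - 1)) 0 * (p (j + 1) - p j) 1
            - (p j - p (j - 1)) 1 * (p (j + 1) - p j) 0) :
    Real.pi * ((k : ℝ) - 1) ≤
      ∑ j ∈ Finset.range k,
        EuclideanGeometry.angle (p (i + j - 1)) (p (i + j)) (p (i + j + 1)) := by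
  obtain ⟨s, rfl⟩ : ∃ s, i = s + 1 := ⟨i - 1, by omega⟩
  set e := Complex.orthonormalBasisOneI.repr.symm
  set q : ℕ → ℂ := fun r ↦ e (p (s + r))
  have hvert : ∀ r, p (s + 1 + r - 1) = p (s + r) ∧ p (s + 1 + r) = p (s + (r + 1)) ∧
      p (s + 1 + r + 1) = p (s + (r + 2)) := fun r ↦ by refine ⟨?_, ?_, ?_⟩ <;> congr 1 <;> omega
  have hangle : ∀ r, EuclideanGeometry.angle (p (s + 1 + r - 1)) (p (s + 1 + r))
      (p (s + 1 + r + 1)) = EuclideanGeometry.angle (q r) (q (r + 1)) (q (r + 2)) := by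
    intro r
    obtain ⟨h₀, h₁, h₂⟩ := hvert r
    rw [h₀, h₁, h₂]
    exact (e.toAffineIsometryEquiv.toAffineIsometry.angle_map _ _ _).symm
  simp_rw [hangle]
  refine pi_mul_sub_one_le_sum_angle (fun r hr ↦ e.injective.ne (hne (s + r) (by omega)))
    (fun r hr ↦ ?_) (fun j l hjl hl ↦ ?_) (fun j l hjl hl ↦ ?_)
  · obtain ⟨h₀, h₁, h₂⟩ := hvert r
    have h := hleft (s + 1 + r) (by omega) (by omega)
    rw [h₀, h₁, h₂] at h
    exact Complex.im_div_pos_of_cross_pos (by simpa [q, e] using h)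
  · rw [← map_sub, ← map_sub, e.inner_map_map]
    exact hic.inner_later_segment_nonneg (j := s + j) (l := s + l) (by omega) (by omega)
  · rw [← map_sub, ← map_sub, e.inner_map_map]
    exact hic.inner_earlier_segment_nonneg (j := s + j) (l := s + l) (by omega) (by omega)

/-- In an increasing-chord polygonal path `p 0, …, p m`, for any chain of `k ≥ 2`
consecutive left turns at the vertices `p i, p (i+1), …, p (i+k-1)`
(with `1 ≤ i` and `i + k - 1 ≤ m - 1`), the sum of the `k` angles at these
vertices is at least `π * (k - 1)`.  A left turn at `p j` means that the determinant
of the vectors `p j - p (j-1)` and `p (j+1) - p j` is strictly positive. -/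
theorem increasingChords_left_turn_angle_sum (m : ℕ)
    (p : ℕ → EuclideanSpace ℝ (Fin 2)) (hne : ∀ i < m, p i ≠ p (i + 1))
    (hic : IsIncreasingChordsPoly m p)
    (k i : ℕ) (hk : 2 ≤ k) (hi : 1 ≤ i) (hik : i + k ≤ m)
    (hleft : ∀ j : ℕ, i ≤ j → j < i + k →
      0 < (p j - p (j - 1)) 0 * (p (j + 1) - p j) 1
            - (p j - p (j - 1)) 1 * (p (j + 1) - p j) 0) :
    Real.pi * ((k : ℝ) - 1) ≤
      ∑ j ∈ Finset.range k,
        EuclideanGeometry.angle (p (i + j - 1)) (p (i + j)) (p (i + j + 1)) :=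
  increasingChords_left_turn_angle_sum_general m p hne hic k i hi hik hleft
end

section
/- Let T be a finite tree (connected acyclic simple graph) with at least two vertices. If T admits a self-approaching drawing in ℝ², then every vertex of T has degree at most 4. -/
/-- A straight-line drawing `ρ` of a graph `G` is self-approaching if `ρ` is injective
and for every ordered pair of distinct vertices `(s, t)` there is a path from `s` to `t`
in `G` whose polygonal drawing under `ρ` is self-approaching. -/
def IsSelfApproachingDrawing {V : Type*} (G : SimpleGraph V)
    (ρ : V → EuclideanSpace ℝ (Fin 2)) : Prop :=
  Function.Injective ρ ∧
  ∀ s t : V, s ≠ t → ∃ w : G.Walk s t, w.IsPath ∧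
    IsSelfApproachingPoly w.length (fun n => ρ (w.getVert n))

/-! Between two neighbours `a, b` of a vertex `v` of a tree the only path is `a v b`, and its
being self-approaching makes `ρ v` the point of the segment `[ρ a, ρ v]` closest to `ρ b`, so the
angle `a v b` is at least a right angle. Hence the edge vectors at `v` are nonzero and pairwise
non-acute, and the plane holds at most four such vectors: by the identity
`⟪u, x⟫ ⟪u, y⟫ + ω u x ω u y = ‖u‖² ⟪x, y⟫`, the area forms `ω u x` of the others against one of
them, `u`, have pairwise nonpositive products and are never both zero, so at most one is positive,
one negative and one zero. -/

open SimpleGraph RealInnerProductSpace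

theorem encard_le_three_of_pairwise_mul_nonpos {α : Type*} {T : Set α} {f : α → ℝ}
    (hmul : T.Pairwise fun x y => f x * f y ≤ 0)
    (hzero : T.Pairwise fun x y => f x ≠ 0 ∨ f y ≠ 0) : T.encard ≤ 3 := by
  have hpos : {x ∈ T | 0 < f x}.Subsingleton := fun x hx y hy => by
    by_contra hxy
    exact (hmul hx.1 hy.1 hxy).not_gt (mul_pos hx.2 hy.2)
  have hneg : {x ∈ T | f x < 0}.Subsingleton := fun x hx y hy => by
    by_contra hxy
    exact (hmul hx.1 hy.1 hxy).not_gt (mul_pos_of_neg_of_neg hx.2 hy.2)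
  have hzero' : {x ∈ T | f x = 0}.Subsingleton := fun x hx y hy => by
    by_contra hxy
    exact (hzero hx.1 hy.1 hxy).elim (· hx.2) (· hy.2)
  have hcover : T ⊆ {x ∈ T | 0 < f x} ∪ {x ∈ T | f x < 0} ∪ {x ∈ T | f x = 0} := by
    intro x hx
    rcases lt_trichotomy 0 (f x) with h | h | h
    · exact .inl (.inl ⟨hx, h⟩)
    · exact .inr ⟨hx, h.symm⟩
    · exact .inl (.inr ⟨hx, h⟩)
  rw [← Set.encard_le_one_iff_subsingleton] at hpos hneg hzero'
  calc T.encard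
      ≤ ({x ∈ T | 0 < f x} ∪ {x ∈ T | f x < 0} ∪ {x ∈ T | f x = 0}).encard :=
        Set.encard_le_encard hcover
    _ ≤ {x ∈ T | 0 < f x}.encard + {x ∈ T | f x < 0}.encard + {x ∈ T | f x = 0}.encard :=
        (Set.encard_union_le _ _).trans (by gcongr; exact Set.encard_union_le _ _)
    _ ≤ 1 + 1 + 1 := add_le_add (add_le_add hpos hneg) hzero'
    _ = 3 := by norm_num

namespace Orientation

variable {E : Type*} [NormedAddCommGroup E] [InnerProductSpace ℝ E] [Fact (Module.finrank ℝ E = 2)]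
  (o : Orientation ℝ E (Fin 2))

theorem areaForm_mul_areaForm_nonpos {u x y : E} (hx : ⟪u, x⟫ ≤ 0) (hy : ⟪u, y⟫ ≤ 0)
    (hxy : ⟪x, y⟫ ≤ 0) : o.areaForm u x * o.areaForm u y ≤ 0 := by
  have := o.inner_mul_inner_add_areaForm_mul_areaForm u x y
  nlinarith [mul_nonneg_of_nonpos_of_nonpos hx hy, sq_nonneg ‖u‖]

theorem inner_neg_of_areaForm_eq_zero {u x : E} (hu : u ≠ 0) (hx : x ≠ 0) (hux : ⟪u, x⟫ ≤ 0)
    (hω : o.areaForm u x = 0) : ⟪u, x⟫ < 0 := by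
  have := o.inner_sq_add_areaForm_sq u x
  rw [hω] at this
  refine hux.lt_of_ne fun h => ?_
  simp_all

end Orientation

theorem encard_le_four_of_pairwise_inner_nonpos {E : Type*} [NormedAddCommGroup E]
    [InnerProductSpace ℝ E] [Fact (Module.finrank ℝ E = 2)] {S : Set E} (h0 : 0 ∉ S)
    (hS : S.Pairwise fun x y => ⟪x, y⟫ ≤ 0) : S.encard ≤ 4 := by
  obtain rfl | ⟨u, hu⟩ := S.eq_empty_or_nonempty
  · simp
  have : FiniteDimensional ℝ E := .of_fact_finrank_eq_two
  let o : Orientation ℝ E (Fin 2) := (Module.finBasisOfFinrankEq ℝ E Fact.out).orientation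
  have hne : ∀ x ∈ S, x ≠ 0 := fun x hx h => h0 (h ▸ hx)
  have hinner : ∀ x ∈ S \ {u}, ⟪u, x⟫ ≤ 0 := fun x hx => hS hu hx.1 (Ne.symm hx.2)
  have hT : (S \ {u}).encard ≤ 3 := by
    refine encard_le_three_of_pairwise_mul_nonpos (f := o.areaForm u) ?_ ?_
    · exact fun x hx y hy hxy =>
        o.areaForm_mul_areaForm_nonpos (hinner x hx) (hinner y hy) (hS hx.1 hy.1 hxy)
    · intro x hx y hy hxy
      by_contra! hω
      have hux := o.inner_neg_of_areaForm_eq_zero (hne u hu) (hne x hx.1) (hinner x hx) hω.1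
      have huy := o.inner_neg_of_areaForm_eq_zero (hne u hu) (hne y hy.1) (hinner y hy) hω.2
      have := o.inner_mul_inner_add_areaForm_mul_areaForm u x y
      rw [hω.1, zero_mul, add_zero] at this
      nlinarith [hS hx.1 hy.1 hxy, mul_pos_of_neg_of_neg hux huy, sq_nonneg ‖u‖]
  calc S.encard ≤ (S \ {u}).encard + ({u} : Set E).encard :=
        Set.encard_le_encard_sdiff_add_encard _ _
    _ ≤ 3 + 1 := by rw [Set.encard_singleton]; gcongr
    _ = 4 := by norm_num

theorem real_inner_sub_nonpos_of_forall_dist_le {F : Type*} [NormedAddCommGroup F]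
    [InnerProductSpace ℝ F] {x y z : F}
    (h : ∀ s ∈ Set.Icc (0 : ℝ) 1, dist y z ≤ dist ((1 - s) • x + s • y) z) :
    ⟪x - y, z - y⟫ ≤ 0 := by
  have : Nonempty (segment ℝ x y) := ⟨⟨y, right_mem_segment ℝ x y⟩⟩
  have hmin : ‖z - y‖ = ⨅ w : segment ℝ x y, ‖z - w‖ := by
    refine le_antisymm (le_ciInf fun ⟨w, hw⟩ => ?_) (ciInf_le ⟨0, Set.forall_mem_range.2
      fun _ => norm_nonneg _⟩ (⟨y, right_mem_segment ℝ x y⟩ : segment ℝ x y))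
    rw [segment_eq_image] at hw
    obtain ⟨s, hs, rfl⟩ := hw
    simpa only [dist_comm _ z, dist_eq_norm] using h s hs
  rw [real_inner_comm]
  exact (norm_eq_iInf_iff_real_inner_le_zero (convex_segment x y) (right_mem_segment ℝ x y)).1
    hmin x (left_mem_segment ℝ x y)

theorem IsSelfApproachingPoly.inner_sub_nonpos {m : ℕ} {p : ℕ → EuclideanSpace ℝ (Fin 2)}
    (h : IsSelfApproachingPoly m p) {i : ℕ} (hi : i + 2 ≤ m) :
    ⟪p i - p (i + 1), p (i + 2) - p (i + 1)⟫ ≤ 0 := by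
  refine real_inner_sub_nonpos_of_forall_dist_le fun s hs => ?_
  have := h i (i + 1) (i + 1) s 0 1 (by omega) (by omega) (by omega) hs (by simp) (by simp)
    (.inl (by omega)) (.inr ⟨rfl, zero_le_one⟩)
  simpa [polyPt] using this

theorem IsSelfApproachingDrawing.inner_sub_nonpos_of_adj {V : Type*} {G : SimpleGraph V}
    {ρ : V → EuclideanSpace ℝ (Fin 2)} (hρ : IsSelfApproachingDrawing G ρ) (hG : G.IsAcyclic)
    {v a b : V} (ha : G.Adj v a) (hb : G.Adj v b) (hab : a ≠ b) :
    ⟪ρ a - ρ v, ρ b - ρ v⟫ ≤ 0 := by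
  obtain ⟨w, hw, hsa⟩ := hρ.2 a b hab
  let P : G.Walk a b := .cons ha.symm (.cons hb .nil)
  have hP : P.IsPath := by simp [P, Walk.cons_isPath_iff, ha.ne', hb.ne, hab]
  obtain rfl : w = P := congrArg Subtype.val ((hG.subsingleton_path a b).elim ⟨w, hw⟩ ⟨P, hP⟩)
  exact hsa.inner_sub_nonpos (i := 0) le_rfl

theorem selfApproachingDrawing_tree_maxDegree_le_four_general
    {V : Type*} (G : SimpleGraph V) (hT : G.IsTree)
    (ρ : V → EuclideanSpace ℝ (Fin 2)) (hρ : IsSelfApproachingDrawing G ρ) :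
    ∀ v : V, (G.neighborSet v).ncard ≤ 4 := by
  have : Fact (Module.finrank ℝ (EuclideanSpace ℝ (Fin 2)) = 2) := ⟨finrank_euclideanSpace_fin⟩
  intro v
  have hinj : Function.Injective fun u => ρ u - ρ v := fun _ _ h => hρ.1 (sub_left_injective h)
  suffices h : ((fun u => ρ u - ρ v) '' G.neighborSet v).encard ≤ 4 by
    rw [hinj.encard_image] at h
    exact (Set.encard_le_coe_iff_finite_ncard_le.1 h).2
  refine encard_le_four_of_pairwise_inner_nonpos ?_ ?_
  · rintro ⟨u, hu, hzero⟩
    exact G.ne_of_adj hu (hρ.1 (sub_eq_zero.1 hzero)).symm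
  · rintro _ ⟨a, ha, rfl⟩ _ ⟨b, hb, rfl⟩ hab
    exact hρ.inner_sub_nonpos_of_adj hT.isAcyclic ha hb fun h => hab (h ▸ rfl)

/-- In any self-approaching drawing of a finite tree with at least two vertices,
every vertex has degree at most 4. -/
theorem selfApproachingDrawing_tree_maxDegree_le_four
    {V : Type*} [Fintype V] (G : SimpleGraph V) (hT : G.IsTree)
    (hcard : 2 ≤ Fintype.card V)
    (ρ : V → EuclideanSpace ℝ (Fin 2)) (hρ : IsSelfApproachingDrawing G ρ) :
    ∀ v : V, (G.neighborSet v).ncard ≤ 4 :=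
  selfApproachingDrawing_tree_maxDegree_le_four_general G hT ρ hρ
end

section
/- Let ρ be a self-approaching drawing in ℝ² of a finite tree T. Then for every pair of distinct vertices s, t of T and every path s = w₀, w₁, …, w_m = t in T, the polygonal path on ρ(w₀), …, ρ(w_m) has increasing chords. -/
lemma polyPt_rev (m : ℕ) (p : ℕ → EuclideanSpace ℝ (Fin 2)) (i : ℕ) (hi : i < m) (s : ℝ) :
    polyPt (fun n => p (m - n)) i s = polyPt p (m - 1 - i) (1 - s) := by
  have h1 : m - (i + 1) = m - 1 - i := by omega
  have h2 : m - 1 - i + 1 = m - i := by omega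
  simp only [polyPt, h1, h2, sub_sub_cancel]
  abel

lemma rev_sa_increasing (m : ℕ) (p : ℕ → EuclideanSpace ℝ (Fin 2))
    (h1 : IsSelfApproachingPoly m p)
    (h2 : IsSelfApproachingPoly m (fun n => p (m - n))) :
    IsIncreasingChordsPoly m p := by
  intro i j k l s t u v hi hj hk hl hs ht hu hv hij hjk hkl
  have step1 : dist (polyPt p j t) (polyPt p l v) ≤ dist (polyPt p i s) (polyPt p l v) :=
    h1 i j l s t v hi hj hl hs ht hv hij
      (by rcases hjk with h | ⟨h, h'⟩ <;> rcases hkl with g | ⟨g, g'⟩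
          · exact Or.inl (h.trans g)
          · exact Or.inl (by omega)
          · exact Or.inl (by omega)
          · exact Or.inr ⟨by omega, by subst h g; linarith⟩)
  have hu' : (1 : ℝ) - u ∈ Set.Icc (0:ℝ) 1 := ⟨by linarith [hu.2], by linarith [hu.1]⟩
  have ht' : (1 : ℝ) - t ∈ Set.Icc (0:ℝ) 1 := ⟨by linarith [ht.2], by linarith [ht.1]⟩
  have hv' : (1 : ℝ) - v ∈ Set.Icc (0:ℝ) 1 := ⟨by linarith [hv.2], by linarith [hv.1]⟩
  have step2 := h2 (m - 1 - l) (m - 1 - k) (m - 1 - j) (1 - v) (1 - u) (1 - t)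
      (by omega) (by omega) (by omega) hv' hu' ht'
      (by rcases hkl with h | ⟨h, h'⟩
          · exact Or.inl (by omega)
          · exact Or.inr ⟨by omega, by linarith⟩)
      (by rcases hjk with h | ⟨h, h'⟩
          · exact Or.inl (by omega)
          · exact Or.inr ⟨by omega, by linarith⟩)
  rw [polyPt_rev m p _ (by omega), polyPt_rev m p _ (by omega), polyPt_rev m p _ (by omega)] at step2
  have e : ∀ a, a < m → m - 1 - (m - 1 - a) = a := by omega
  rw [e k hk, e j hj, e l hl] at step2
  simp only [sub_sub_cancel] at step2
  calc dist (polyPt p j t) (polyPt p k u)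
      = dist (polyPt p k u) (polyPt p j t) := dist_comm _ _
    _ ≤ dist (polyPt p l v) (polyPt p j t) := step2
    _ = dist (polyPt p j t) (polyPt p l v) := dist_comm _ _
    _ ≤ dist (polyPt p i s) (polyPt p l v) := step1

/-- In a self-approaching drawing of a finite tree, the drawing of every path between
two distinct vertices has increasing chords. -/
theorem selfApproachingDrawing_tree_paths_increasingChords
    {V : Type*} [Fintype V] (G : SimpleGraph V) (hT : G.IsTree)
    (ρ : V → EuclideanSpace ℝ (Fin 2)) (hρ : IsSelfApproachingDrawing G ρ) :
    ∀ (s t : V), s ≠ t → ∀ w : G.Walk s t, w.IsPath →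
      IsIncreasingChordsPoly w.length (fun n => ρ (w.getVert n)) := by
  intro s t hst w hw i j k l sp tp up vp hi hj hk hl hsp htp hup hvp h1 h2 h3
  obtain ⟨w1, hw1, hsa1⟩ := hρ.2 s t hst
  obtain ⟨w2, hw2, hsa2⟩ := hρ.2 t s hst.symm
  have e1 : w1 = w := by
    have := hT.IsAcyclic.path_unique ⟨w1, hw1⟩ ⟨w, hw⟩
    exact congrArg Subtype.val this
  have e2 : w2 = w.reverse := by
    have := hT.IsAcyclic.path_unique ⟨w2, hw2⟩ ⟨w.reverse, hw.reverse⟩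
    exact congrArg Subtype.val this
  rw [e1] at hsa1
  rw [e2] at hsa2
  clear hw1 hw2 e1 e2
  have hrev : IsSelfApproachingPoly w.length
      (fun n => (fun n => ρ (w.getVert n)) (w.length - n)) := by
    have hl : w.reverse.length = w.length := w.length_reverse
    have : (fun n => ρ (w.reverse.getVert n))
        = fun n => ρ (w.getVert (w.length - n)) := by
      funext n; rw [w.getVert_reverse]
    rw [hl, this] at hsa2
    exact hsa2
  exact rev_sa_increasing w.length _ hsa1 hrev i j k l sp tp up vp hi hj hk hl hsp htp hup hvp h1 h2 h3
end

section
/- Let ρ be a self-approaching drawing in ℝ² of a finite tree T. Then for every edge {u,v} of T and every edge {a,b} of T with {a,b} ≠ {u,v}, the closed segment [ρ(a), ρ(b)] is disjoint from the open slab slab(ρ(u), ρ(v)). In particular, no vertex image ρ(w) lies in slab(ρ(u), ρ(v)). -/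
/-- The open slab `slab u v` for distinct `u, v`: the open strip strictly between the
two lines through `u` and through `v` perpendicular to the segment `uv`. -/
def slab (u v : EuclideanSpace ℝ (Fin 2)) : Set (EuclideanSpace ℝ (Fin 2)) :=
  {x | 0 < (inner ℝ (x - u) (v - u) : ℝ) ∧ 0 < (inner ℝ (x - v) (u - v) : ℝ)}

/-!
Removing an edge `uv` from the tree splits it into the component of `u` and the component of
`v`. For `w` on the side of `v`, the unique tree path from `u` to `w` starts with the edge `uv`;
since this path is self-approaching, `ρ v` is the point of the first segment closest to `ρ w`,
so `ρ w` lies in the closed half-plane beyond the perpendicular to `uv` at `ρ v`. Any other edge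
lies entirely on one side, hence its segment lies in one of the two half-planes separated by the
slab.
-/

open scoped InnerProductSpace

section Geometry

variable {E : Type*} [NormedAddCommGroup E] [InnerProductSpace ℝ E]

def farHalfSpace (u v : E) : Set E :=
  {x | ⟪x - v, u - v⟫_ℝ ≤ 0}

@[simp]
theorem mem_farHalfSpace {u v x : E} : x ∈ farHalfSpace u v ↔ ⟪x - v, u - v⟫_ℝ ≤ 0 :=
  Iff.rfl

theorem convex_farHalfSpace (u v : E) : Convex ℝ (farHalfSpace u v) := by
  have h : farHalfSpace u v = {x | ⟪x, u - v⟫_ℝ ≤ ⟪v, u - v⟫_ℝ} := by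
    ext x
    simp only [mem_farHalfSpace, Set.mem_ofPred_eq, inner_sub_left, sub_nonpos]
  rw [h]
  exact convex_halfSpace_le
    ⟨fun x y => inner_add_left x y _, fun c x => real_inner_smul_left x _ c⟩ _

theorem mem_farHalfSpace_of_forall_dist_le {u v w : E}
    (h : ∀ x ∈ segment ℝ u v, dist v w ≤ dist x w) : w ∈ farHalfSpace u v := by
  have hv : v ∈ segment ℝ u v := right_mem_segment ℝ u v
  have : Nonempty (segment ℝ u v) := ⟨⟨v, hv⟩⟩
  have hmin : ‖w - v‖ = ⨅ x : segment ℝ u v, ‖w - x‖ := by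
    refine le_antisymm (le_ciInf fun x => ?_) (ciInf_le ⟨0, ?_⟩ (⟨v, hv⟩ : segment ℝ u v))
    · simpa only [dist_comm _ w, dist_eq_norm] using h x x.2
    · rintro _ ⟨x, rfl⟩
      exact norm_nonneg _
  exact (norm_eq_iInf_iff_real_inner_le_zero (convex_segment u v) hv).mp hmin u
    (left_mem_segment ℝ u v)

end Geometry

theorem slab_comm (u v : EuclideanSpace ℝ (Fin 2)) : slab u v = slab v u := by
  ext x
  exact and_comm

theorem disjoint_farHalfSpace_slab (u v : EuclideanSpace ℝ (Fin 2)) :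
    Disjoint (farHalfSpace u v) (slab u v) :=
  Set.disjoint_left.mpr fun _ hx hslab => (not_le.mpr hslab.2) hx

theorem disjoint_segment_slab_of_mem_farHalfSpace {u v a b : EuclideanSpace ℝ (Fin 2)}
    (ha : a ∈ farHalfSpace u v) (hb : b ∈ farHalfSpace u v) :
    Disjoint (segment ℝ a b) (slab u v) :=
  (disjoint_farHalfSpace_slab u v).mono_left ((convex_farHalfSpace u v).segment_subset ha hb)

theorem IsSelfApproachingPoly.mem_farHalfSpace {m : ℕ} {p : ℕ → EuclideanSpace ℝ (Fin 2)}
    (hp : IsSelfApproachingPoly m p) (hm : 0 < m) : p m ∈ farHalfSpace (p 0) (p 1) := by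
  refine mem_farHalfSpace_of_forall_dist_le ?_
  rw [segment_eq_image]
  rintro _ ⟨s, hs, rfl⟩
  have hlast : ParamLE 0 1 (m - 1) 1 := by
    rcases Nat.eq_zero_or_pos (m - 1) with h | h
    · exact Or.inr ⟨h.symm, le_rfl⟩
    · exact Or.inl h
  have h := hp 0 0 (m - 1) s 1 1 hm hm (by omega) hs (Set.right_mem_Icc.mpr zero_le_one)
    (Set.right_mem_Icc.mpr zero_le_one) (Or.inr ⟨rfl, hs.2⟩) hlast
  simpa [polyPt, Nat.sub_add_cancel hm] using h

section Tree

open SimpleGraph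

variable {V : Type*} {G : SimpleGraph V}

theorem reachable_deleteEdges_or {u v w : V} (h : G.Reachable w v) :
    (G.deleteEdges {s(u, v)}).Reachable w v ∨ (G.deleteEdges {s(u, v)}).Reachable w u := by
  obtain ⟨p⟩ := h
  induction p with
  | nil => exact Or.inl .rfl
  | @cons w x v hwx _ ih =>
    by_cases he : s(w, x) = s(u, v)
    · rcases Sym2.eq_iff.mp he with ⟨rfl, -⟩ | ⟨rfl, -⟩
      · exact Or.inr .rfl
      · exact Or.inl .rfl
    · have hwx' : (G.deleteEdges {s(u, v)}).Adj w x := by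
        simp only [deleteEdges_adj, Set.mem_singleton_iff]
        exact ⟨hwx, he⟩
      exact ih.imp hwx'.reachable.trans hwx'.reachable.trans

variable {ρ : V → EuclideanSpace ℝ (Fin 2)}

theorem IsSelfApproachingDrawing.mem_farHalfSpace_of_reachable (hρ : IsSelfApproachingDrawing G ρ)
    (hG : G.IsAcyclic) {u v w : V} (huv : G.Adj u v)
    (hw : (G.deleteEdges {s(u, v)}).Reachable v w) : ρ w ∈ farHalfSpace (ρ u) (ρ v) := by
  classical
  obtain ⟨P, hP⟩ := hw.exists_isPath
  have hu : u ∉ P.support := fun hu =>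
    isAcyclic_iff_forall_adj_isBridge.mp hG huv ⟨(P.takeUntil u hu).reverse⟩
  have huw : u ≠ w := fun h => hu (h ▸ P.end_mem_support)
  obtain ⟨Q, hQ, hsa⟩ := hρ.2 u w huw
  have hQP : Q = .cons huv (P.mapLe (deleteEdges_le _)) :=
    (hG.subsingleton_path u w).elim ⟨Q, hQ⟩
      ⟨_, (hP.mapLe _).cons (by rwa [Walk.support_mapLe_eq_support])⟩ |> congrArg Subtype.val
  subst hQP
  simpa using hsa.mem_farHalfSpace (by simp)

theorem IsSelfApproachingDrawing.disjoint_segment_slab (hρ : IsSelfApproachingDrawing G ρ)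
    (hT : G.IsTree) {u v a b : V} (huv : G.Adj u v)
    (hab : (G.deleteEdges {s(u, v)}).Reachable a b) :
    Disjoint (segment ℝ (ρ a) (ρ b)) (slab (ρ u) (ρ v)) := by
  rcases reachable_deleteEdges_or (u := u) (hT.connected.preconnected a v) with h | h
  · exact disjoint_segment_slab_of_mem_farHalfSpace
      (hρ.mem_farHalfSpace_of_reachable hT.isAcyclic huv h.symm)
      (hρ.mem_farHalfSpace_of_reachable hT.isAcyclic huv (h.symm.trans hab))
  · rw [Sym2.eq_swap] at h hab
    rw [slab_comm]
    exact disjoint_segment_slab_of_mem_farHalfSpace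
      (hρ.mem_farHalfSpace_of_reachable hT.isAcyclic huv.symm h.symm)
      (hρ.mem_farHalfSpace_of_reachable hT.isAcyclic huv.symm (h.symm.trans hab))

end Tree

theorem selfApproachingDrawing_tree_slab_empty_general
    {V : Type*} (G : SimpleGraph V) (hT : G.IsTree)
    (ρ : V → EuclideanSpace ℝ (Fin 2)) (hρ : IsSelfApproachingDrawing G ρ) :
    (∀ u v a b : V, G.Adj u v → G.Adj a b →
      ¬((a = u ∧ b = v) ∨ (a = v ∧ b = u)) →
      Disjoint (segment ℝ (ρ a) (ρ b)) (slab (ρ u) (ρ v))) ∧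
    (∀ u v w : V, G.Adj u v → ρ w ∉ slab (ρ u) (ρ v)) := by
  refine ⟨fun u v a b huv hab hne => ?_, fun u v w huv => ?_⟩
  · have hab' : (G.deleteEdges {s(u, v)}).Adj a b := by
      simp only [SimpleGraph.deleteEdges_adj, Set.mem_singleton_iff, Sym2.eq_iff]
      exact ⟨hab, hne⟩
    exact hρ.disjoint_segment_slab hT huv hab'.reachable
  · exact (hρ.disjoint_segment_slab hT huv .rfl).notMem_of_mem_left (left_mem_segment ℝ _ _)

/-- In a self-approaching drawing of a finite tree, for every edge `{u, v}`, no other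
edge's segment intersects the open slab of `{u, v}`; in particular no vertex image
lies in that slab. -/
theorem selfApproachingDrawing_tree_slab_empty
    {V : Type*} [Fintype V] (G : SimpleGraph V) (hT : G.IsTree)
    (ρ : V → EuclideanSpace ℝ (Fin 2)) (hρ : IsSelfApproachingDrawing G ρ) :
    (∀ u v a b : V, G.Adj u v → G.Adj a b →
      ¬((a = u ∧ b = v) ∨ (a = v ∧ b = u)) →
      Disjoint (segment ℝ (ρ a) (ρ b)) (slab (ρ u) (ρ v))) ∧
    (∀ u v w : V, G.Adj u v → ρ w ∉ slab (ρ u) (ρ v)) :=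
  selfApproachingDrawing_tree_slab_empty_general G hT ρ hρ
end

section
/- The crab graph admits no self-approaching drawing in ℝ². -/
/-- The crab graph: a tree on 14 vertices.  Vertex `0` is `a`, `1` is `b`,
`2, 3` are `a₁, a₂`, `4, 5` are `b₁, b₂`, and `6, …, 13` are the eight leaves
`l₁, …, l₈` attached in pairs to `a₁, a₂, b₁, b₂`. -/
def crabGraph : SimpleGraph (Fin 14) :=
  SimpleGraph.fromEdgeSet
    {s(0, 1), s(0, 2), s(0, 3), s(1, 4), s(1, 5),
     s(2, 6), s(2, 7), s(3, 8), s(3, 9),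
     s(4, 10), s(4, 11), s(5, 12), s(5, 13)}

/-!
If `ℓ` is a leaf with parent `p`, every self-approaching path from `ℓ` to another vertex `z` starts
along the segment `ℓp`, so `∠ ℓ p z ≥ π / 2`. At each of `a₁, a₂, b₁, b₂` the two leaves make an
angle of at least `π / 2`, so every vertex outside this cherry lies in a cone of opening at most
`π / 2`, or, if the two leaves are opposite, on a line; but no cherry fits on a line together with
a further point. Hence each of the four parents sees the other three within a right angle. Seen
from `a₁`, one of the other parents lies in the angle spanned by the remaining two, and the angle
conditions then force the four parents to form a rectangle. A leaf at `a₁` would have to be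
orthogonal to both sides of that rectangle at `a₁`.
-/

open scoped RealInnerProductSpace

section InnerProductSpace

variable {E : Type*} [NormedAddCommGroup E] [InnerProductSpace ℝ E]

theorem inner_nonpos_of_forall_dist_le {a b c : E}
    (h : ∀ w ∈ segment ℝ a b, dist b c ≤ dist w c) : ⟪a - b, c - b⟫ ≤ 0 := by
  have hb : b ∈ segment ℝ a b := right_mem_segment ℝ a b
  have : Nonempty (segment ℝ a b) := ⟨⟨b, hb⟩⟩
  have hmin : ‖c - b‖ = ⨅ w : segment ℝ a b, ‖c - w‖ := by
    refine le_antisymm (le_ciInf fun w => ?_) (ciInf_le ?_ (⟨b, hb⟩ : segment ℝ a b))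
    · simpa only [dist_comm _ c, dist_eq_norm] using h w w.2
    · exact ⟨0, by rintro _ ⟨w, rfl⟩; exact norm_nonneg _⟩
  rw [real_inner_comm]
  exact (norm_eq_iInf_iff_real_inner_le_zero (convex_segment a b) hb).1 hmin a
    (left_mem_segment ℝ a b)

def NonobtuseAt (p : E) (S : Set E) : Prop :=
  ∀ x ∈ S, ∀ y ∈ S, 0 ≤ ⟪x - p, y - p⟫

theorem NonobtuseAt.mono {p : E} {S T : Set E} (h : NonobtuseAt p S) (hT : T ⊆ S) :
    NonobtuseAt p T :=
  fun x hx y hy => h x (hT hx) y (hT hy)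

theorem NonobtuseAt.sub_const {p : E} {S : Set E} (h : NonobtuseAt p S) (a : E) :
    NonobtuseAt (p - a) ((· - a) '' S) := by
  rintro _ ⟨x, hx, rfl⟩ _ ⟨y, hy, rfl⟩
  simpa only [sub_sub_sub_cancel_right] using h x hx y hy

/-- The constraints that a self-approaching drawing puts on two leaves `ℓ₁, ℓ₂` hanging at `p`,
where `S` is the rest of the drawing: the angles `∠ ℓ₁ p ℓ₂` and `∠ ℓᵢ p z` for `z ∈ S` are at
least `π / 2`. -/
structure IsCherry (p ℓ₁ ℓ₂ : E) (S : Set E) : Prop where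
  leaf₁_ne : ℓ₁ ≠ p
  leaf₂_ne : ℓ₂ ≠ p
  inner_leaves_nonpos : ⟪ℓ₁ - p, ℓ₂ - p⟫ ≤ 0
  inner_leaf₁_nonpos : ∀ z ∈ S, ⟪ℓ₁ - p, z - p⟫ ≤ 0
  inner_leaf₂_nonpos : ∀ z ∈ S, ⟪ℓ₂ - p, z - p⟫ ≤ 0

theorem IsCherry.mono {p ℓ₁ ℓ₂ : E} {S T : Set E} (h : IsCherry p ℓ₁ ℓ₂ S) (hT : T ⊆ S) :
    IsCherry p ℓ₁ ℓ₂ T where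
  leaf₁_ne := h.leaf₁_ne
  leaf₂_ne := h.leaf₂_ne
  inner_leaves_nonpos := h.inner_leaves_nonpos
  inner_leaf₁_nonpos z hz := h.inner_leaf₁_nonpos z (hT hz)
  inner_leaf₂_nonpos z hz := h.inner_leaf₂_nonpos z (hT hz)

theorem IsCherry.not_collinear {q ℓ₁ ℓ₂ r : E} {S : Set E} (h : IsCherry q ℓ₁ ℓ₂ S) (hr : r ∈ S)
    (hrq : r ≠ q) : ¬ Collinear ℝ {q, ℓ₁, ℓ₂, r} := by
  rw [collinear_iff_of_mem (Set.mem_insert q _)]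
  rintro ⟨v, hv⟩
  have coord : ∀ z ∈ ({q, ℓ₁, ℓ₂, r} : Set E), z ≠ q → ∃ t ≠ (0 : ℝ), z - q = t • v := by
    intro z hz hzq
    obtain ⟨t, rfl⟩ := hv z hz
    refine ⟨t, fun ht => hzq (by simp [ht]), by simp⟩
  obtain ⟨t₁, ht₁, e₁⟩ := coord ℓ₁ (by simp) h.leaf₁_ne
  obtain ⟨t₂, ht₂, e₂⟩ := coord ℓ₂ (by simp) h.leaf₂_ne
  obtain ⟨t₃, ht₃, e₃⟩ := coord r (by simp) hrq
  have hv : 0 < ⟪v, v⟫ :=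
    real_inner_self_pos.2 fun hv => h.leaf₁_ne (sub_eq_zero.1 (by simpa [hv] using e₁))
  have h₁₂ := h.inner_leaves_nonpos
  have h₁₃ := h.inner_leaf₁_nonpos r hr
  have h₂₃ := h.inner_leaf₂_nonpos r hr
  simp only [e₁, e₂, e₃, real_inner_smul_left, real_inner_smul_right] at h₁₂ h₁₃ h₂₃
  -- the product of the three nonpositive pairwise inner products is a positive square
  have : 0 < (t₁ * t₂ * t₃) ^ 2 * ⟪v, v⟫ ^ 3 := by positivity
  nlinarith [mul_nonneg_of_nonpos_of_nonpos h₁₂ h₁₃]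

theorem inner_eq_zero_of_inner_le {x y o : E} {α β : ℝ} (hα : 0 ≤ α) (hβ : 0 ≤ β)
    (ho : o = α • x + β • y) (hxy : x ≠ y) (ho₀ : o ≠ 0) (hox : o ≠ x) (hoy : o ≠ y)
    (h₀ : 0 ≤ ⟪x, y⟫) (h_x : ⟪x, o⟫ ≤ ⟪x, x⟫) (h_y : ⟪y, o⟫ ≤ ⟪y, y⟫)
    (h_ox : ⟪x, o⟫ ≤ ⟪o, o⟫) (h_oy : ⟪y, o⟫ ≤ ⟪o, o⟫)
    (h_oxy : ⟪x, o⟫ + ⟪y, o⟫ ≤ ⟪o, o⟫ + ⟪x, y⟫) : ⟪x, y⟫ = 0 := by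
  have hX : ⟪x, o⟫ = α * ⟪x, x⟫ + β * ⟪x, y⟫ := by
    rw [ho, inner_add_right, real_inner_smul_right, real_inner_smul_right]
  have hY : ⟪y, o⟫ = α * ⟪x, y⟫ + β * ⟪y, y⟫ := by
    rw [ho, inner_add_right, real_inner_smul_right, real_inner_smul_right, real_inner_comm]
  have hN : ⟪o, o⟫ = α * ⟪x, o⟫ + β * ⟪y, o⟫ := by
    nth_rewrite 1 [ho]
    rw [inner_add_left, real_inner_smul_left, real_inner_smul_left]
  by_contra hr
  have hr : 0 < ⟪x, y⟫ := lt_of_le_of_ne h₀ (Ne.symm hr)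
  -- `α • h_x + β • h_y + h_oxy` says `(α + β - 1) * ⟪x, y⟫ ≤ 0`
  have hle : α + β ≤ 1 := by nlinarith
  have hge : 1 ≤ α + β := by
    by_contra! hlt
    have hpos : 0 < α + β := by
      by_contra! h
      exact ho₀ (by simp [ho, show α = 0 by linarith, show β = 0 by linarith])
    have hXpos : 0 < ⟪x, o⟫ := by nlinarith
    have hYpos : 0 < ⟪y, o⟫ := by nlinarith
    nlinarith [mul_lt_mul_of_pos_right (show β < 1 - α by linarith) hYpos,
      mul_lt_mul_of_pos_right (show α < 1 - β by linarith) hXpos]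
  -- so `o` lies on the segment from `x` to `y`, where the angle at `o` is straight
  have hxy' : 0 < ⟪x, x⟫ - 2 * ⟪x, y⟫ + ⟪y, y⟫ := by
    have := real_inner_self_pos.2 (sub_ne_zero.2 hxy)
    simp only [inner_sub_left, inner_sub_right, real_inner_comm x y] at this
    linarith
  have hαβ : α * β = 0 := by
    obtain rfl : β = 1 - α := by linarith
    nlinarith [mul_nonneg hα hβ]
  rcases mul_eq_zero.1 hαβ with rfl | rfl
  · exact hoy (by simp [ho, show β = 1 by linarith])
  · exact hox (by simp [ho, show α = 1 by linarith])

theorem eq_add_of_inner_le {x y o : E} {α β : ℝ} (hα : 0 ≤ α) (hβ : 0 ≤ β)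
    (ho : o = α • x + β • y) (hx : x ≠ 0) (hy : y ≠ 0) (ho₀ : o ≠ 0) (hox : o ≠ x)
    (hoy : o ≠ y) (h₀ : ⟪x, y⟫ = 0) (h_x : ⟪x, o⟫ ≤ ⟪x, x⟫) (h_y : ⟪y, o⟫ ≤ ⟪y, y⟫)
    (h_oxy : ⟪x, o⟫ + ⟪y, o⟫ ≤ ⟪o, o⟫ + ⟪x, y⟫) : o = x + y := by
  have hX : ⟪x, o⟫ = α * ⟪x, x⟫ := by
    rw [ho, inner_add_right, real_inner_smul_right, real_inner_smul_right, h₀, mul_zero, add_zero]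
  have hY : ⟪y, o⟫ = β * ⟪y, y⟫ := by
    rw [ho, inner_add_right, real_inner_smul_right, real_inner_smul_right, real_inner_comm, h₀,
      mul_zero, zero_add]
  have hN : ⟪o, o⟫ = α * ⟪x, o⟫ + β * ⟪y, o⟫ := by
    nth_rewrite 1 [ho]
    rw [inner_add_left, real_inner_smul_left, real_inner_smul_left]
  have hp := real_inner_self_pos.2 hx
  have hq := real_inner_self_pos.2 hy
  have hα₁ : α ≤ 1 := by nlinarith
  have hβ₁ : β ≤ 1 := by nlinarith
  have hα' : α * (1 - α) = 0 := by
    nlinarith [mul_nonneg hα (sub_nonneg.2 hα₁), mul_nonneg hβ (sub_nonneg.2 hβ₁)]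
  have hβ' : β * (1 - β) = 0 := by
    nlinarith [mul_nonneg hα (sub_nonneg.2 hα₁), mul_nonneg hβ (sub_nonneg.2 hβ₁)]
  have hα₁ : α = 1 := by
    rcases mul_eq_zero.1 hα' with h | h
    · rcases mul_eq_zero.1 hβ' with h' | h'
      · exact absurd (by simp [ho, h, h']) ho₀
      · exact absurd (by simp [ho, h, show β = 1 by linarith]) hoy
    · linarith
  have hβ₁ : β = 1 := by
    rcases mul_eq_zero.1 hβ' with h | h
    · exact absurd (by simp [ho, hα₁, h]) hox
    · linarith
  rw [ho, hα₁, hβ₁, one_smul, one_smul]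

theorem inner_eq_zero_and_eq_add_of_nonobtuseAt {x y o : E} {α β : ℝ} (hα : 0 ≤ α) (hβ : 0 ≤ β)
    (ho : o = α • x + β • y) (hx : x ≠ 0) (hy : y ≠ 0) (hxy : x ≠ y) (ho₀ : o ≠ 0) (hox : o ≠ x)
    (hoy : o ≠ y) (h₀ : NonobtuseAt 0 {x, y}) (h_x : NonobtuseAt x {0, o})
    (h_y : NonobtuseAt y {0, o}) (h_o : NonobtuseAt o {0, x, y}) :
    ⟪x, y⟫ = 0 ∧ o = x + y := by
  have hr₀ : 0 ≤ ⟪x, y⟫ := by simpa using h₀ x (by simp) y (by simp)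
  have hXp : ⟪x, o⟫ ≤ ⟪x, x⟫ := by
    have := h_x 0 (by simp) o (by simp)
    simp only [zero_sub, inner_neg_left, inner_sub_right] at this
    linarith
  have hYq : ⟪y, o⟫ ≤ ⟪y, y⟫ := by
    have := h_y 0 (by simp) o (by simp)
    simp only [zero_sub, inner_neg_left, inner_sub_right] at this
    linarith
  have hXN : ⟪x, o⟫ ≤ ⟪o, o⟫ := by
    have := h_o 0 (by simp) x (by simp)
    simp only [zero_sub, inner_neg_left, inner_sub_right, real_inner_comm x o] at this
    linarith
  have hYN : ⟪y, o⟫ ≤ ⟪o, o⟫ := by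
    have := h_o 0 (by simp) y (by simp)
    simp only [zero_sub, inner_neg_left, inner_sub_right, real_inner_comm y o] at this
    linarith
  have hXYN : ⟪x, o⟫ + ⟪y, o⟫ ≤ ⟪o, o⟫ + ⟪x, y⟫ := by
    have := h_o x (by simp) y (by simp)
    simp only [inner_sub_left, inner_sub_right, real_inner_comm y o] at this
    linarith
  have hr := inner_eq_zero_of_inner_le hα hβ ho hxy ho₀ hox hoy hr₀ hXp hYq hXN hYN hXYN
  exact ⟨hr, eq_add_of_inner_le hα hβ ho hx hy ho₀ hox hoy hr hXp hYq hXYN⟩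

end InnerProductSpace

local notation "ℝ²" => EuclideanSpace ℝ (Fin 2)

namespace Plane

def cross (x y : ℝ²) : ℝ := x 0 * y 1 - x 1 * y 0

theorem inner_eq_coords (x y : ℝ²) : ⟪x, y⟫ = x 0 * y 0 + x 1 * y 1 := by
  simp [PiLp.inner_apply, Fin.sum_univ_two, mul_comm]

theorem inner_mul_inner_add_cross_mul_cross (a x y : ℝ²) :
    ⟪a, x⟫ * ⟪a, y⟫ + cross a x * cross a y = ⟪a, a⟫ * ⟪x, y⟫ := by
  simp only [inner_eq_coords, cross]; ring

theorem inner_sq_add_cross_sq (x y : ℝ²) : ⟪x, y⟫ ^ 2 + cross x y ^ 2 = ⟪x, x⟫ * ⟪y, y⟫ := by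
  rw [sq, sq, inner_mul_inner_add_cross_mul_cross]

theorem inner_self_smul_of_cross_eq_zero {x y : ℝ²} (h : cross x y = 0) :
    ⟪x, x⟫ • y = ⟪x, y⟫ • x := by
  rw [inner_eq_coords, inner_eq_coords]
  unfold cross at h
  ext i
  fin_cases i <;> simp <;> [linear_combination (-x 1) * h; linear_combination x 0 * h]

theorem cross_smul_eq (x y z : ℝ²) : cross x y • z = cross z y • x + cross x z • y := by
  ext i
  fin_cases i <;> simp [cross] <;> ring

/-- The dual of an obtuse angle is acute, unless the angle is straight. -/
theorem inner_nonneg_or_inner_eq_zero {y₁ y₂ : ℝ²} (hy₂ : y₂ ≠ 0) (h : ⟪y₁, y₂⟫ ≤ 0) :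
    (∀ u v, ⟪y₁, u⟫ ≤ 0 → ⟪y₂, u⟫ ≤ 0 → ⟪y₁, v⟫ ≤ 0 → ⟪y₂, v⟫ ≤ 0 → 0 ≤ ⟪u, v⟫) ∨
      ∀ u, ⟪y₁, u⟫ ≤ 0 → ⟪y₂, u⟫ ≤ 0 → ⟪y₁, u⟫ = 0 := by
  have lagrange := inner_mul_inner_add_cross_mul_cross y₁ y₂
  by_cases hD : cross y₁ y₂ = 0
  · right
    intro u hu₁ hu₂
    have hg := inner_sq_add_cross_sq y₁ y₂
    have hu := lagrange u
    rw [hD] at hg hu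
    have : ⟪y₁, y₂⟫ * ⟪y₁, u⟫ = 0 := by
      nlinarith [mul_nonneg_of_nonpos_of_nonpos h hu₁, real_inner_self_nonneg (x := y₁)]
    rcases mul_eq_zero.1 this with h0 | h0
    · have : ⟪y₁, y₁⟫ = 0 := by
        nlinarith [real_inner_self_pos.2 hy₂, real_inner_self_nonneg (x := y₁)]
      simp [inner_self_eq_zero.1 this]
    · exact h0
  · left
    intro u v hu₁ hu₂ hv₁ hv₂
    have hy₁ : 0 < ⟪y₁, y₁⟫ := real_inner_self_pos.2 fun h => hD (by simp [h, cross])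
    have hu : cross y₁ y₂ * cross y₁ u ≤ 0 := by
      nlinarith [lagrange u, mul_nonneg_of_nonpos_of_nonpos h hu₁]
    have hv : cross y₁ y₂ * cross y₁ v ≤ 0 := by
      nlinarith [lagrange v, mul_nonneg_of_nonpos_of_nonpos h hv₁]
    -- `u` and `v` lie on the same side of the line `ℝ ∙ y₁`
    have huv : 0 ≤ cross y₁ u * cross y₁ v := by
      have := mul_nonneg_of_nonpos_of_nonpos hu hv
      have : 0 < cross y₁ y₂ ^ 2 := by positivity
      nlinarith
    nlinarith [inner_mul_inner_add_cross_mul_cross y₁ u v, mul_nonneg_of_nonpos_of_nonpos hu₁ hv₁]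

theorem eq_zero_of_inner_eq_zero {x y u : ℝ²} (hx : x ≠ 0) (hy : y ≠ 0) (hxy : ⟪x, y⟫ = 0)
    (hux : ⟪x, u⟫ = 0) (huy : ⟪y, u⟫ = 0) : u = 0 := by
  have hxy' : cross x y ≠ 0 := fun h => by
    have := inner_sq_add_cross_sq x y
    rw [hxy, h] at this
    nlinarith [mul_pos (real_inner_self_pos.2 hx) (real_inner_self_pos.2 hy)]
  have hxu : cross x u = 0 := by
    have := inner_mul_inner_add_cross_mul_cross x y u
    rw [hxy, huy] at this
    simpa [hxy'] using this
  have := inner_sq_add_cross_sq x u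
  rw [hux, hxu] at this
  simpa [hx] using this.symm

theorem exists_nonneg_smul_add_of_inner_nonneg {x y z : ℝ²} (hx : x ≠ 0) (hy : y ≠ 0)
    (hz : z ≠ 0) (hxy : 0 ≤ ⟪x, y⟫) (hxz : 0 ≤ ⟪x, z⟫) (hyz : 0 ≤ ⟪y, z⟫) :
    (∃ α β : ℝ, 0 ≤ α ∧ 0 ≤ β ∧ z = α • x + β • y) ∨
      (∃ α β : ℝ, 0 ≤ α ∧ 0 ≤ β ∧ y = α • x + β • z) ∨
      ∃ α β : ℝ, 0 ≤ α ∧ 0 ≤ β ∧ x = α • y + β • z := by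
  have hxx := real_inner_self_pos.2 hx
  by_cases hD : cross x y = 0
  · refine Or.inr <| Or.inl ⟨⟪x, y⟫ / ⟪x, x⟫, 0, by positivity, le_rfl, ?_⟩
    rw [zero_smul, add_zero, div_eq_inv_mul, mul_smul, ← inner_self_smul_of_cross_eq_zero hD,
      inv_smul_smul₀ hxx.ne']
  set α := cross z y / cross x y
  set β := cross x z / cross x y
  have hzαβ : z = α • x + β • y := by
    rw [← smul_right_inj hD, cross_smul_eq, smul_add, smul_smul, smul_smul,
      mul_div_cancel₀ _ hD, mul_div_cancel₀ _ hD]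
  have hxz' : ⟪x, z⟫ = α * ⟪x, x⟫ + β * ⟪x, y⟫ := by
    rw [hzαβ, inner_add_right, real_inner_smul_right, real_inner_smul_right]
  have hyz' : ⟪y, z⟫ = α * ⟪x, y⟫ + β * ⟪y, y⟫ := by
    rw [hzαβ, inner_add_right, real_inner_smul_right, real_inner_smul_right, real_inner_comm]
  have hyy := real_inner_self_pos.2 hy
  rcases le_or_gt 0 α with hα | hα <;> rcases le_or_gt 0 β with hβ | hβ
  · exact Or.inl ⟨α, β, hα, hβ, hzαβ⟩
  · have hα : 0 < α := by nlinarith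
    refine Or.inr <| Or.inr ⟨-β / α, 1 / α, div_nonneg (by linarith) hα.le, by positivity, ?_⟩
    rw [hzαβ]
    match_scalars <;> field_simp
    ring
  · have hβ : 0 < β := by nlinarith
    refine Or.inr <| Or.inl ⟨-α / β, 1 / β, div_nonneg (by linarith) hβ.le, by positivity, ?_⟩
    rw [hzαβ]
    match_scalars <;> field_simp
    ring
  · have : ⟪z, z⟫ = α * ⟪x, z⟫ + β * ⟪y, z⟫ := by
      nth_rewrite 1 [hzαβ]
      rw [inner_add_left, real_inner_smul_left, real_inner_smul_left]
    nlinarith [real_inner_self_pos.2 hz]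

theorem collinear_of_inner_eq_zero {y p : ℝ²} {s : Set ℝ²} (hy : y ≠ 0)
    (h : ∀ z ∈ s, ⟪y, z - p⟫ = 0) : Collinear ℝ s := by
  have : Fact (Module.finrank ℝ ℝ² = 1 + 1) := ⟨by simp⟩
  rw [collinear_iff_finrank_le_one]
  calc Module.finrank ℝ (vectorSpan ℝ s) ≤ Module.finrank ℝ (ℝ ∙ y)ᗮ := by
        refine Submodule.finrank_mono (Submodule.span_le.2 ?_)
        rintro _ ⟨z₁, hz₁, z₂, hz₂, rfl⟩
        rw [SetLike.mem_coe, Submodule.mem_orthogonal_singleton_iff_inner_right]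
        change ⟪y, z₁ - z₂⟫ = 0
        rw [← sub_sub_sub_cancel_right z₁ z₂ p, inner_sub_right, h z₁ hz₁, h z₂ hz₂, sub_zero]
    _ = 1 := Submodule.finrank_orthogonal_span_singleton hy

end Plane

open Plane in
theorem IsCherry.nonobtuseAt_or_collinear {p ℓ₁ ℓ₂ : ℝ²} {S : Set ℝ²} (h : IsCherry p ℓ₁ ℓ₂ S) :
    NonobtuseAt p S ∨ Collinear ℝ (insert p S) := by
  rcases inner_nonneg_or_inner_eq_zero (sub_ne_zero.2 h.leaf₂_ne) h.inner_leaves_nonpos with H | H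
  · exact Or.inl fun x hx y hy => H _ _ (h.inner_leaf₁_nonpos x hx) (h.inner_leaf₂_nonpos x hx)
      (h.inner_leaf₁_nonpos y hy) (h.inner_leaf₂_nonpos y hy)
  · refine Or.inr <| collinear_of_inner_eq_zero (p := p) (sub_ne_zero.2 h.leaf₁_ne) ?_
    rintro z (rfl | hz)
    · simp
    · exact H _ (h.inner_leaf₁_nonpos z hz) (h.inner_leaf₂_nonpos z hz)

theorem eq_of_nonobtuseAt_of_inner_nonpos {a b c d ℓ : ℝ²} {α β : ℝ} (hα : 0 ≤ α) (hβ : 0 ≤ β)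
    (hc : c - a = α • (b - a) + β • (d - a)) (hab : b ≠ a) (had : d ≠ a) (hac : c ≠ a)
    (hcb : c ≠ b) (hcd : c ≠ d) (hbd : b ≠ d) (ha : NonobtuseAt a {b, d})
    (hb : NonobtuseAt b {a, c, ℓ}) (hd : NonobtuseAt d {a, c, ℓ}) (hc' : NonobtuseAt c {a, b, d})
    (hℓb : ⟪ℓ - a, b - a⟫ ≤ 0) (hℓd : ⟪ℓ - a, d - a⟫ ≤ 0) : ℓ = a := by
  obtain ⟨hperp, hsum⟩ := inner_eq_zero_and_eq_add_of_nonobtuseAt hα hβ hc (sub_ne_zero.2 hab)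
    (sub_ne_zero.2 had) (sub_left_injective.ne hbd) (sub_ne_zero.2 hac)
    (sub_left_injective.ne hcb) (sub_left_injective.ne hcd)
    (by simpa [Set.image_insert_eq] using ha.sub_const a)
    ((hb.sub_const a).mono (by simp [Set.insert_subset_iff]))
    ((hd.sub_const a).mono (by simp [Set.insert_subset_iff]))
    (by simpa [Set.image_insert_eq] using hc'.sub_const a)
  -- `a b c d` is a rectangle, and `ℓ - a` is orthogonal to both of its sides at `a`
  have hℓd' : 0 ≤ ⟪ℓ - a, d - a⟫ := by
    have := hb ℓ (by simp) c (by simp)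
    rwa [show c - b = d - a by rw [← sub_sub_sub_cancel_right c b a, hsum]; abel,
      show ℓ - b = (ℓ - a) - (b - a) by abel, inner_sub_left, hperp, sub_zero] at this
  have hℓb' : 0 ≤ ⟪ℓ - a, b - a⟫ := by
    have := hd ℓ (by simp) c (by simp)
    rwa [show c - d = b - a by rw [← sub_sub_sub_cancel_right c d a, hsum]; abel,
      show ℓ - d = (ℓ - a) - (d - a) by abel, inner_sub_left, real_inner_comm (b - a) (d - a),
      hperp, sub_zero] at this
  refine sub_eq_zero.1 (Plane.eq_zero_of_inner_eq_zero (sub_ne_zero.2 hab) (sub_ne_zero.2 had)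
    hperp ?_ ?_) <;> rw [real_inner_comm] <;> linarith

theorem not_injective_of_forall_isCherry (p ℓ₁ ℓ₂ : Fin 4 → ℝ²)
    (h : ∀ i, IsCherry (p i) (ℓ₁ i) (ℓ₂ i) {z | ∃ j ≠ i, z = p j ∨ z = ℓ₁ j ∨ z = ℓ₂ j}) :
    ¬ Function.Injective p := by
  intro hp
  set S : Fin 4 → Set ℝ² := fun i => {z | ∃ j ≠ i, z = p j ∨ z = ℓ₁ j ∨ z = ℓ₂ j}
  have hS : ∀ {i j}, j ≠ i → p j ∈ S i ∧ ℓ₁ j ∈ S i ∧ ℓ₂ j ∈ S i := fun hj =>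
    ⟨⟨_, hj, .inl rfl⟩, ⟨_, hj, .inr (.inl rfl)⟩, ⟨_, hj, .inr (.inr rfl)⟩⟩
  have hnonobtuse : ∀ i, NonobtuseAt (p i) (S i) := by
    intro i
    refine (h i).nonobtuseAt_or_collinear.resolve_right fun hcol => ?_
    obtain ⟨h₁, h₂, h₁₂⟩ : i + 1 ≠ i ∧ i + 2 ≠ i ∧ i + 2 ≠ i + 1 := by fin_cases i <;> decide
    -- the cherry at `p (i + 1)` and the point `p (i + 2)` would be collinear
    refine (h (i + 1)).not_collinear (hS h₁₂).1 (hp.ne h₁₂) (hcol.subset ?_)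
    simp only [Set.insert_subset_iff, Set.mem_insert_iff, Set.singleton_subset_iff]
    exact ⟨.inr (hS h₁).1, .inr (hS h₁).2.1, .inr (hS h₁).2.2, .inr (hS h₂).1⟩
  have not_mem_angle : ∀ j k l : Fin 4, j ≠ 0 ∧ k ≠ 0 ∧ l ≠ 0 ∧ k ≠ j ∧ k ≠ l ∧ j ≠ l →
      (∃ α β : ℝ, 0 ≤ α ∧ 0 ≤ β ∧ p k - p 0 = α • (p j - p 0) + β • (p l - p 0)) → False := by
    rintro j k l ⟨hj, hk, hl, hkj, hkl, hjl⟩ ⟨α, β, hα, hβ, hc⟩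
    refine (h 0).leaf₁_ne (eq_of_nonobtuseAt_of_inner_nonpos hα hβ hc (hp.ne hj) (hp.ne hl)
      (hp.ne hk) (hp.ne hkj) (hp.ne hkl) (hp.ne hjl) ((hnonobtuse 0).mono ?_) ((hnonobtuse j).mono ?_)
      ((hnonobtuse l).mono ?_) ((hnonobtuse k).mono ?_) ((h 0).inner_leaf₁_nonpos _ (hS hj).1)
      ((h 0).inner_leaf₁_nonpos _ (hS hl).1)) <;>
    simp only [Set.insert_subset_iff, Set.singleton_subset_iff]
    · exact ⟨(hS hj).1, (hS hl).1⟩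
    · exact ⟨(hS hj.symm).1, (hS hkj).1, (hS hj.symm).2.1⟩
    · exact ⟨(hS hl.symm).1, (hS hkl).1, (hS hl.symm).2.1⟩
    · exact ⟨(hS hk.symm).1, (hS hkj.symm).1, (hS hkl.symm).1⟩
  have hne : ∀ i : Fin 4, i ≠ 0 → p i - p 0 ≠ 0 := fun i hi => sub_ne_zero.2 (hp.ne hi)
  have hin : ∀ i j : Fin 4, i ≠ 0 → j ≠ 0 → 0 ≤ ⟪p i - p 0, p j - p 0⟫ := fun i j hi hj =>
    hnonobtuse 0 _ (hS hi).1 _ (hS hj).1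
  rcases Plane.exists_nonneg_smul_add_of_inner_nonneg (hne 1 (by decide)) (hne 2 (by decide))
    (hne 3 (by decide)) (hin 1 2 (by decide) (by decide)) (hin 1 3 (by decide) (by decide))
    (hin 2 3 (by decide) (by decide)) with hc | hc | hc
  · exact not_mem_angle 1 3 2 (by decide) hc
  · exact not_mem_angle 1 2 3 (by decide) hc
  · exact not_mem_angle 2 1 3 (by decide) hc

section SelfApproachingDrawing

variable {V : Type*} {G : SimpleGraph V} {ρ : V → ℝ²}

theorem IsSelfApproachingDrawing.inner_nonpos_of_leaf (hρ : IsSelfApproachingDrawing G ρ)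
    {ℓ p z : V} (hℓ : ∀ v, G.Adj ℓ v → v = p) (hz : z ≠ ℓ) : ⟪ρ ℓ - ρ p, ρ z - ρ p⟫ ≤ 0 := by
  obtain ⟨w, -, hw⟩ := hρ.2 ℓ z hz.symm
  cases w with
  | nil => exact absurd rfl hz
  | @cons _ v _ hadj w =>
    obtain rfl := hℓ v hadj
    apply inner_nonpos_of_forall_dist_le
    rw [segment_eq_image]
    rintro _ ⟨s, hs, rfl⟩
    have := hw 0 0 w.length s 1 1 (by simp) (by simp) (by simp) hs ⟨zero_le_one, le_rfl⟩
      ⟨zero_le_one, le_rfl⟩ (Or.inr ⟨rfl, hs.2⟩)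
      (w.length.eq_zero_or_pos.elim (fun h => Or.inr ⟨h.symm, le_rfl⟩) Or.inl)
    simpa [polyPt] using this

theorem IsSelfApproachingDrawing.isCherry (hρ : IsSelfApproachingDrawing G ρ) {p ℓ₁ ℓ₂ : V}
    (h₁ : ∀ v, G.Adj ℓ₁ v → v = p) (h₂ : ∀ v, G.Adj ℓ₂ v → v = p) (hℓ : ℓ₁ ≠ ℓ₂) (hp₁ : ℓ₁ ≠ p)
    (hp₂ : ℓ₂ ≠ p) : IsCherry (ρ p) (ρ ℓ₁) (ρ ℓ₂) (ρ '' {ℓ₁, ℓ₂}ᶜ) where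
  leaf₁_ne := hρ.1.ne hp₁
  leaf₂_ne := hρ.1.ne hp₂
  inner_leaves_nonpos := hρ.inner_nonpos_of_leaf h₁ hℓ.symm
  inner_leaf₁_nonpos := by
    rintro _ ⟨z, hz, rfl⟩
    exact hρ.inner_nonpos_of_leaf h₁ fun h => hz (by simp [h])
  inner_leaf₂_nonpos := by
    rintro _ ⟨z, hz, rfl⟩
    exact hρ.inner_nonpos_of_leaf h₂ fun h => hz (by simp [h])

end SelfApproachingDrawing

/-- The crab graph admits no self-approaching drawing in the plane. -/
theorem crabGraph_no_selfApproachingDrawing :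
    ¬ ∃ ρ : Fin 14 → EuclideanSpace ℝ (Fin 2),
        IsSelfApproachingDrawing crabGraph ρ := by
  rintro ⟨ρ, hρ⟩
  let parent (i : Fin 4) : Fin 14 := ⟨i + 2, by omega⟩
  let leaf₁ (i : Fin 4) : Fin 14 := ⟨2 * i + 6, by omega⟩
  let leaf₂ (i : Fin 4) : Fin 14 := ⟨2 * i + 7, by omega⟩
  have adj₁ : ∀ i v, crabGraph.Adj (leaf₁ i) v → v = parent i := by unfold crabGraph; decide
  have adj₂ : ∀ i v, crabGraph.Adj (leaf₂ i) v → v = parent i := by unfold crabGraph; decide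
  refine not_injective_of_forall_isCherry (ρ ∘ parent) (ρ ∘ leaf₁) (ρ ∘ leaf₂) (fun i => ?_)
    (hρ.1.comp fun i j h => by simpa [parent, Fin.ext_iff] using h)
  refine (hρ.isCherry (adj₁ i) (adj₂ i) ?_ ?_ ?_).mono ?sub
  case sub =>
    rintro _ ⟨j, hj, rfl | rfl | rfl⟩ <;> refine ⟨_, ?_, rfl⟩ <;>
      simp [parent, leaf₁, leaf₂, Fin.ext_iff] <;> omega
  all_goals simp only [parent, leaf₁, leaf₂, ne_eq, Fin.ext_iff]; omega
end
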